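/- arXiv:2603.20774 — 5 statements merged into one kernel-verified Lean document; each statement's English description precedes it below -/
import Mathlib

section
/- Let G be a graph with n vertices, n ≥ 2. Then q(G) ≤ 2e(G)/(n−1) + n − 2. -/
open scoped Classical

/-- The largest real eigenvalue of a real matrix. -/
noncomputable def maxEig {V : Type*} [Fintype V] (M : Matrix V V ℝ) : ℝ :=
  sSup {t : ℝ | ∃ x : V → ℝ, x ≠ 0 ∧ M.mulVec x = t • x}

/-- The adjacency matrix of a simple graph (over ℝ). -/
noncomputable def adjMat {V : Type*} [Fintype V] (G : SimpleGraph V) : Matrix V V ℝ :=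
  Matrix.of fun i j => if G.Adj i j then 1 else 0

/-- The adjacency spectral radius ρ(G). -/
noncomputable def adjRad {V : Type*} [Fintype V] (G : SimpleGraph V) : ℝ :=
  maxEig (adjMat G)

/-- The signless Laplacian matrix Q(G) = D(G) + A(G). -/
noncomputable def signlessLapMat {V : Type*} [Fintype V] (G : SimpleGraph V) : Matrix V V ℝ :=
  Matrix.of (fun i j => if i = j then ({w | G.Adj i w}.ncard : ℝ) else 0) + adjMat G

/-- The signless Laplacian spectral radius q(G). -/
noncomputable def qRad {V : Type*} [Fintype V] (G : SimpleGraph V) : ℝ :=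
  maxEig (signlessLapMat G)

/-- The distance matrix of a graph. -/
noncomputable def distMat {V : Type*} [Fintype V] (G : SimpleGraph V) : Matrix V V ℝ :=
  Matrix.of fun i j => (G.dist i j : ℝ)

/-- The distance spectral radius μ(G). -/
noncomputable def distRad {V : Type*} [Fintype V] (G : SimpleGraph V) : ℝ :=
  maxEig (distMat G)

/-- i(G - S): the number of isolated vertices of the subgraph of `G` induced on `V ∖ S`. -/
noncomputable def numIso {V : Type*} (G : SimpleGraph V) (S : Set V) : ℕ :=
  {v | v ∉ S ∧ ∀ w ∉ S, ¬ G.Adj v w}.ncard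

/-- `G` is isolated `t`-tough: `t · i(G−S) ≤ |S|` whenever `i(G−S) ≥ 2`. -/
def IsolatedTough {V : Type*} (G : SimpleGraph V) (t : ℝ) : Prop :=
  ∀ S : Set V, 2 ≤ numIso G S → t * (numIso G S : ℝ) ≤ (S.ncard : ℝ)

/-- `G` has a `{K_{1,j} : m ≤ j ≤ 2m}`-factor: a spanning subgraph each of whose
connected components is isomorphic to a star `K_{1,j}` with `m ≤ j ≤ 2m`. -/
def HasStarFactor {V : Type*} (G : SimpleGraph V) (m : ℕ) : Prop :=
  ∃ H : SimpleGraph V, H ≤ G ∧ ∀ c : H.ConnectedComponent,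
    ∃ j : ℕ, m ≤ j ∧ j ≤ 2 * m ∧
      Nonempty ((SimpleGraph.induce c.supp H) ≃g completeBipartiteGraph (Fin 1) (Fin j))

/-- The graph `K_s ∨ (K_{n-s-t} ∪ t·K_1)` on `Fin n`: the first `s` vertices form a
clique joined to all other vertices, the next `n - t - s` vertices form a clique, and
the last `t` vertices form an independent set. -/
def Gstar (n s t : ℕ) : SimpleGraph (Fin n) where
  Adj u v := u ≠ v ∧ ((u : ℕ) < s ∨ (v : ℕ) < s ∨ ((u : ℕ) < n - t ∧ (v : ℕ) < n - t))
  symm := by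
    constructor
    intro u v h
    refine ⟨h.1.symm, ?_⟩
    rcases h.2 with h | h | h
    · exact Or.inr (Or.inl h)
    · exact Or.inl h
    · exact Or.inr (Or.inr ⟨h.2, h.1⟩)
  loopless := by constructor; intro u h; exact h.1 rfl

/-- The number of edges e(G). -/
noncomputable def edgeCount {V : Type*} (G : SimpleGraph V) : ℕ := G.edgeSet.ncard

/-- The Wiener index W(G) = Σ_{i<j} d(v_i, v_j). -/
noncomputable def wiener {n : ℕ} (G : SimpleGraph (Fin n)) : ℕ :=
  ∑ p ∈ Finset.univ.filter (fun p : Fin n × Fin n => p.1 < p.2), G.dist p.1 p.2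
section DasAux
open Finset

lemma das_arith (d r A B M : ℝ) (hd : 1 ≤ d) (hr : 0 ≤ r) (hr1 : r = 0 ∨ 1 ≤ r)
    (hB0 : 0 ≤ B) (hA : A ≤ d*(d-1)) (hB : B ≤ d*r)
    (hM : 2*d + A + 2*B ≤ M) :
    (d+r)*(d^2 + d + A + B) ≤ d*M + d*(d+r-1)*(d+r) := by
  rcases hr1 with h0 | h1
  · subst h0; nlinarith [mul_nonneg (by linarith : (0:ℝ) ≤ d) (by linarith : 0 ≤ M - 2*d - A - 2*B)]
  · rcases le_or_gt r d with h | h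
    · nlinarith [mul_nonneg (by linarith : (0:ℝ) ≤ d) (by linarith : 0 ≤ M - 2*d - A - 2*B),
        mul_nonneg hr (by linarith : 0 ≤ d*(d-1) - A),
        mul_nonneg (mul_nonneg (by linarith : (0:ℝ) ≤ d) hr) (by linarith : 0 ≤ r - 1),
        mul_nonneg hB0 (by linarith : 0 ≤ d - r)]
    · nlinarith [mul_nonneg (by linarith : (0:ℝ) ≤ d) (by linarith : 0 ≤ M - 2*d - A - 2*B),
        mul_nonneg hr (by linarith : 0 ≤ d*(d-1) - A),
        mul_nonneg (mul_nonneg (by linarith : (0:ℝ) ≤ d) hr) (by linarith : 0 ≤ d - 1),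
        mul_nonneg (by linarith : (0:ℝ) ≤ d*r - B) (by linarith : 0 ≤ r - d)]

lemma das_deg {V : Type*} [Fintype V] (G : SimpleGraph V) (hn : 2 ≤ Fintype.card V)
    (u : V) (hd : 0 < (Finset.univ.filter (G.Adj u)).card) :
    ((Finset.univ.filter (G.Adj u)).card : ℝ)
      + (∑ v ∈ Finset.univ.filter (G.Adj u), ((Finset.univ.filter (G.Adj v)).card : ℝ))
        / ((Finset.univ.filter (G.Adj u)).card : ℝ)
      ≤ 2 * (edgeCount G : ℝ) / ((Fintype.card V : ℝ) - 1) + (Fintype.card V : ℝ) - 2 := by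
  classical
  set D : V → ℕ := fun v => (Finset.univ.filter (G.Adj v)).card with hDdef
  set N : Finset V := Finset.univ.filter (G.Adj u) with hNdef
  set R : Finset V := Finset.univ.filter (fun v => ¬ G.Adj u v ∧ v ≠ u) with hRdef
  -- partition of univ
  have huN : u ∉ N := by simp [hNdef]
  have hcover : ({u} ∪ N) ∪ R = Finset.univ := by
    ext v; simp only [hNdef, hRdef, mem_union, mem_singleton, mem_filter, mem_univ, true_and,
      iff_true]
    tauto
  have hdis1 : Disjoint ({u} : Finset V) N := by
    simp [Finset.disjoint_singleton_left, huN]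
  have hdis2 : Disjoint ({u} ∪ N) R := by
    rw [Finset.disjoint_left]
    intro v hv hvR
    simp only [hNdef, hRdef, mem_union, mem_singleton, mem_filter, mem_univ, true_and] at hv hvR
    rcases hv with h | h
    · exact hvR.2 h
    · exact hvR.1 h
  have hsplit : ∀ f : V → ℕ, ∑ v, f v = f u + ∑ v ∈ N, f v + ∑ v ∈ R, f v := by
    intro f
    rw [← hcover, Finset.sum_union hdis2, Finset.sum_union hdis1, Finset.sum_singleton]
  -- indicator
  set I : V → V → ℕ := fun v w => if G.Adj v w then 1 else 0 with hIdef
  have hDI : ∀ v, D v = ∑ w, I v w := by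
    intro v; rw [hDdef]; exact Finset.card_filter _ _
  have hIsymm : ∀ v w, I v w = I w v := by
    intro v w; simp [hIdef, G.adj_comm]
  -- S = d + A + B
  have hS : ∑ v ∈ N, D v = N.card + (∑ v ∈ N, ∑ w ∈ N, I v w) + (∑ v ∈ N, ∑ w ∈ R, I v w) := by
    have h1 : ∀ v ∈ N, D v = I v u + ∑ w ∈ N, I v w + ∑ w ∈ R, I v w := by
      intro v hv; rw [hDI]; exact hsplit (I v)
    rw [Finset.sum_congr rfl h1, Finset.sum_add_distrib, Finset.sum_add_distrib]
    congr 2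
    have : ∀ v ∈ N, I v u = 1 := by
      intro v hv
      simp only [hNdef, mem_filter, mem_univ, true_and] at hv
      simp [hIdef, G.adj_comm, hv]
    rw [Finset.sum_congr rfl this, Finset.sum_const, smul_eq_mul, mul_one]
  -- A bound
  have hA : ∑ v ∈ N, ∑ w ∈ N, I v w ≤ N.card * (N.card - 1) := by
    have h1 : ∀ v ∈ N, ∑ w ∈ N, I v w ≤ N.card - 1 := by
      intro v hv
      have : ∑ w ∈ N, I v w = (N.filter (G.Adj v)).card := (Finset.card_filter _ _).symm
      rw [this]
      have hsub : N.filter (G.Adj v) ⊆ N.erase v := by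
        intro w hw
        simp only [mem_filter] at hw
        exact Finset.mem_erase.mpr ⟨(G.ne_of_adj hw.2).symm, hw.1⟩
      calc (N.filter (G.Adj v)).card ≤ (N.erase v).card := Finset.card_le_card hsub
        _ = N.card - 1 := Finset.card_erase_of_mem hv
    calc ∑ v ∈ N, ∑ w ∈ N, I v w ≤ ∑ _v ∈ N, (N.card - 1) := Finset.sum_le_sum h1
      _ = N.card * (N.card - 1) := by rw [Finset.sum_const, smul_eq_mul]
  -- B bound
  have hB : ∑ v ∈ N, ∑ w ∈ R, I v w ≤ N.card * R.card := by
    have h1 : ∀ v ∈ N, ∑ w ∈ R, I v w ≤ R.card := by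
      intro v hv
      have : ∑ w ∈ R, I v w = (R.filter (G.Adj v)).card := (Finset.card_filter _ _).symm
      rw [this]
      exact Finset.card_le_card (Finset.filter_subset _ _)
    calc ∑ v ∈ N, ∑ w ∈ R, I v w ≤ ∑ _v ∈ N, R.card := Finset.sum_le_sum h1
      _ = N.card * R.card := by rw [Finset.sum_const, smul_eq_mul]
  -- handshake
  have hhand : ∑ v, D v = 2 * edgeCount G := by
    have h1 : ∀ v, D v = G.degree v := by
      intro v
      simp only [hDdef]
      rw [← SimpleGraph.neighborFinset_eq_filter]
      rfl
    have h2 : edgeCount G = G.edgeFinset.card := by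
      rw [edgeCount, Set.ncard_eq_toFinset_card']
      congr 1
    rw [h2, ← SimpleGraph.sum_degrees_eq_twice_card_edges]
    exact Finset.sum_congr rfl fun v _ => h1 v
  -- R degrees bound
  have hR : ∑ v ∈ N, ∑ w ∈ R, I v w ≤ ∑ v ∈ R, D v := by
    have h1 : ∑ v ∈ N, ∑ w ∈ R, I v w = ∑ w ∈ R, ∑ v ∈ N, I w v := by
      rw [Finset.sum_comm]
      exact Finset.sum_congr rfl fun w _ => Finset.sum_congr rfl fun v _ => hIsymm v w
    rw [h1]
    apply Finset.sum_le_sum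
    intro w _
    rw [hDI]
    exact Finset.sum_le_sum_of_subset (Finset.subset_univ N)
  -- n = 1 + d + r
  have hcard : Fintype.card V = 1 + N.card + R.card := by
    have := hsplit (fun _ => 1)
    simpa using this
  -- main
  have hDu : D u = N.card := rfl
  have hM : 2 * D u + (∑ v ∈ N, ∑ w ∈ N, I v w) + 2 * (∑ v ∈ N, ∑ w ∈ R, I v w)
      ≤ 2 * edgeCount G := by
    have h2 := hsplit D
    rw [hhand] at h2
    omega
  set Sr : ℝ := ∑ v ∈ N, ((Finset.univ.filter (G.Adj v)).card : ℝ) with hSrdef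
  have hd0 : (0:ℝ) < (N.card:ℝ) := by exact_mod_cast hd
  have hd1 : (1:ℝ) ≤ (N.card:ℝ) := by exact_mod_cast hd
  have hn1 : (0:ℝ) < (Fintype.card V : ℝ) - 1 := by
    have : (2:ℝ) ≤ (Fintype.card V:ℝ) := by exact_mod_cast hn
    linarith
  have hnr : (Fintype.card V : ℝ) = 1 + (N.card:ℝ) + (R.card:ℝ) := by exact_mod_cast hcard
  have hAr : ((∑ v ∈ N, ∑ w ∈ N, I v w : ℕ):ℝ) ≤ (N.card:ℝ) * ((N.card:ℝ) - 1) := by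
    have h1 : (1:ℕ) ≤ N.card := hd
    calc ((∑ v ∈ N, ∑ w ∈ N, I v w : ℕ):ℝ) ≤ ((N.card * (N.card - 1) : ℕ):ℝ) := by
          exact_mod_cast hA
      _ = (N.card:ℝ)*((N.card:ℝ)-1) := by push_cast [h1]; ring
  have hBr : ((∑ v ∈ N, ∑ w ∈ R, I v w : ℕ):ℝ) ≤ (N.card:ℝ) * (R.card:ℝ) := by
    exact_mod_cast hB
  have hMr : 2*(N.card:ℝ) + ((∑ v ∈ N, ∑ w ∈ N, I v w : ℕ):ℝ)
      + 2*((∑ v ∈ N, ∑ w ∈ R, I v w : ℕ):ℝ) ≤ 2*(edgeCount G:ℝ) := by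
    rw [hDu] at hM; exact_mod_cast hM
  have hr1 : ((R.card:ℕ):ℝ) = 0 ∨ 1 ≤ ((R.card:ℕ):ℝ) := by
    rcases Nat.eq_zero_or_pos R.card with h | h
    · left; exact_mod_cast h
    · right; exact_mod_cast h
  have hrpos : (0:ℝ) ≤ ((R.card:ℕ):ℝ) := Nat.cast_nonneg _
  have hBpos : (0:ℝ) ≤ ((∑ v ∈ N, ∑ w ∈ R, I v w : ℕ):ℝ) := Nat.cast_nonneg _
  have harith := das_arith ((N.card:ℕ):ℝ) ((R.card:ℕ):ℝ)
    ((∑ v ∈ N, ∑ w ∈ N, I v w : ℕ):ℝ) ((∑ v ∈ N, ∑ w ∈ R, I v w : ℕ):ℝ)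
    (2*(edgeCount G:ℝ)) hd1 hrpos hr1 hBpos hAr hBr hMr
  have hSr : Sr = (N.card:ℝ) + ((∑ v ∈ N, ∑ w ∈ N, I v w : ℕ):ℝ)
      + ((∑ v ∈ N, ∑ w ∈ R, I v w : ℕ):ℝ) := by
    rw [hSrdef, ← Nat.cast_sum]
    exact_mod_cast hS
  have hdne : ((N.card:ℕ):ℝ) ≠ 0 := ne_of_gt hd0
  have hnne : ((Fintype.card V:ℕ):ℝ) - 1 ≠ 0 := ne_of_gt hn1
  have e1 : (N.card:ℝ) + Sr/(N.card:ℝ) = ((N.card:ℝ)*(N.card:ℝ)+Sr)/(N.card:ℝ) := by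
    rw [add_div, mul_div_cancel_right₀ _ hdne]
  have e2 : 2*(edgeCount G:ℝ)/((Fintype.card V:ℝ)-1) + (Fintype.card V:ℝ) - 2
      = (2*(edgeCount G:ℝ) + ((Fintype.card V:ℝ)-2)*((Fintype.card V:ℝ)-1))
        /((Fintype.card V:ℝ)-1) := by
    rw [add_div, mul_div_cancel_right₀ _ hnne]; ring
  rw [e1, e2, div_le_div_iff₀ hd0 hn1, hSr, hnr]
  nlinarith [harith]


end DasAux

/-- **Lemma 2.5** (Das). `q(G) ≤ 2e(G)/(n−1) + n − 2`. -/
theorem qRad_le {V : Type*} [Fintype V] (G : SimpleGraph V) (hn : 2 ≤ Fintype.card V) :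
    qRad G ≤ 2 * (edgeCount G : ℝ) / ((Fintype.card V : ℝ) - 1) + (Fintype.card V : ℝ) - 2 := by
  classical
  have hn2 : (2:ℝ) ≤ (Fintype.card V:ℝ) := by exact_mod_cast hn
  have hB0 : (0:ℝ) ≤ 2 * (edgeCount G : ℝ) / ((Fintype.card V : ℝ) - 1)
      + (Fintype.card V : ℝ) - 2 := by
    have h1 : (0:ℝ) ≤ 2 * (edgeCount G : ℝ) / ((Fintype.card V : ℝ) - 1) := by
      apply div_nonneg (by positivity); linarith
    linarith
  refine Real.sSup_le ?_ hB0
  rintro t ⟨x, hx0, hxe⟩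
  rcases le_or_gt t 0 with ht | ht
  · linarith
  have heig : ∀ v, ((Finset.univ.filter (G.Adj v)).card : ℝ) * x v
      + ∑ w ∈ Finset.univ.filter (G.Adj v), x w = t * x v := by
    intro v
    have h := congrFun hxe v
    rw [signlessLapMat, Matrix.add_mulVec] at h
    have h1 : (Matrix.of (fun i j => if i = j then ({w | G.Adj i w}.ncard : ℝ) else 0)).mulVec x v
        = ({w | G.Adj v w}.ncard : ℝ) * x v := by
      simp [Matrix.mulVec, dotProduct, ite_mul, Finset.sum_ite_eq]
    have h2 : (adjMat G).mulVec x v = ∑ w ∈ Finset.univ.filter (G.Adj v), x w := by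
      simp [adjMat, Matrix.mulVec, dotProduct, ite_mul, Finset.sum_filter]
    have h3 : {w | G.Adj v w}.ncard = (Finset.univ.filter (G.Adj v)).card := by
      rw [← Set.ncard_coe_finset]; congr 1; ext w; simp
    rw [Pi.add_apply, h1, h2, h3] at h
    simpa using h
  have hiso : ∀ v, (Finset.univ.filter (G.Adj v)).card = 0 → x v = 0 := by
    intro v hv
    have h0 := heig v
    have hemp : Finset.univ.filter (G.Adj v) = ∅ := Finset.card_eq_zero.mp hv
    rw [hv, hemp] at h0
    simp at h0
    rcases h0 with h | h
    · exact absurd h (ne_of_gt ht)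
    · exact h
  obtain ⟨v0, hv0⟩ : ∃ v, x v ≠ 0 := Function.ne_iff.mp hx0
  have hv0d : 0 < (Finset.univ.filter (G.Adj v0)).card := by
    rcases Nat.eq_zero_or_pos (Finset.univ.filter (G.Adj v0)).card with h | h
    · exact absurd (hiso v0 h) hv0
    · exact h
  set F : Finset V := Finset.univ.filter
    (fun v => 0 < (Finset.univ.filter (G.Adj v)).card) with hFdef
  have hv0F : v0 ∈ F := Finset.mem_filter.mpr ⟨Finset.mem_univ v0, hv0d⟩
  obtain ⟨u, huF, hmax⟩ := Finset.exists_max_image F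
    (fun v => |x v| / ((Finset.univ.filter (G.Adj v)).card : ℝ)) ⟨v0, hv0F⟩
  have hud : 0 < (Finset.univ.filter (G.Adj u)).card := by
    simpa [hFdef] using huF
  have hudr : (0:ℝ) < ((Finset.univ.filter (G.Adj u)).card : ℝ) := by exact_mod_cast hud
  have humax : 0 < |x u| / ((Finset.univ.filter (G.Adj u)).card : ℝ) :=
    lt_of_lt_of_le (div_pos (abs_pos.mpr hv0) (by exact_mod_cast hv0d)) (hmax v0 hv0F)
  set ε : ℝ := if 0 ≤ x u then 1 else -1 with hεdef
  set z : V → ℝ := fun v => ε * x v with hzdef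
  have habs : ∀ v, |z v| = |x v| := by
    intro v
    rw [hzdef]
    simp only
    rw [abs_mul, hεdef]
    split <;> simp
  have hzu : z u = |x u| := by
    rw [hzdef]
    simp only
    rw [hεdef]
    split
    · rw [one_mul, abs_of_nonneg (by assumption)]
    · rw [abs_of_neg (lt_of_not_ge (by assumption))]; ring
  have hzu0 : 0 < z u := by
    rw [hzu]
    have := mul_pos humax hudr
    rwa [div_mul_cancel₀ _ (ne_of_gt hudr)] at this
  have heigz : ∀ v, ((Finset.univ.filter (G.Adj v)).card : ℝ) * z v
      + ∑ w ∈ Finset.univ.filter (G.Adj v), z w = t * z v := by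
    intro v
    rw [hzdef]
    simp only
    rw [show ∑ w ∈ Finset.univ.filter (G.Adj v), ε * x w
        = ε * ∑ w ∈ Finset.univ.filter (G.Adj v), x w from (Finset.mul_sum _ _ _).symm]
    linear_combination ε * heig v
  have hnb : ∀ v ∈ Finset.univ.filter (G.Adj u),
      z v ≤ (z u / ((Finset.univ.filter (G.Adj u)).card : ℝ))
        * ((Finset.univ.filter (G.Adj v)).card : ℝ) := by
    intro v hv
    have hadj : G.Adj u v := by simpa using hv
    have hvd : 0 < (Finset.univ.filter (G.Adj v)).card := by
      apply Finset.card_pos.mpr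
      exact ⟨u, Finset.mem_filter.mpr ⟨Finset.mem_univ u, hadj.symm⟩⟩
    have hvdr : (0:ℝ) < ((Finset.univ.filter (G.Adj v)).card : ℝ) := by exact_mod_cast hvd
    have h1 : |x v| / ((Finset.univ.filter (G.Adj v)).card : ℝ)
        ≤ |x u| / ((Finset.univ.filter (G.Adj u)).card : ℝ) :=
      hmax v (Finset.mem_filter.mpr ⟨Finset.mem_univ v, hvd⟩)
    calc z v ≤ |z v| := le_abs_self _
      _ = |x v| := habs v
      _ = (|x v| / ((Finset.univ.filter (G.Adj v)).card : ℝ))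
            * ((Finset.univ.filter (G.Adj v)).card : ℝ) :=
          (div_mul_cancel₀ _ (ne_of_gt hvdr)).symm
      _ ≤ (|x u| / ((Finset.univ.filter (G.Adj u)).card : ℝ))
            * ((Finset.univ.filter (G.Adj v)).card : ℝ) :=
          mul_le_mul_of_nonneg_right h1 (le_of_lt hvdr)
      _ = (z u / ((Finset.univ.filter (G.Adj u)).card : ℝ))
            * ((Finset.univ.filter (G.Adj v)).card : ℝ) := by rw [hzu]
  have hsum : ∑ w ∈ Finset.univ.filter (G.Adj u), z w
      ≤ (z u / ((Finset.univ.filter (G.Adj u)).card : ℝ))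
        * ∑ w ∈ Finset.univ.filter (G.Adj u), ((Finset.univ.filter (G.Adj w)).card : ℝ) := by
    rw [Finset.mul_sum]
    exact Finset.sum_le_sum hnb
  set S' : ℝ := ∑ w ∈ Finset.univ.filter (G.Adj u),
    ((Finset.univ.filter (G.Adj w)).card : ℝ) with hS'def
  have hkey : t ≤ ((Finset.univ.filter (G.Adj u)).card : ℝ)
      + S' / ((Finset.univ.filter (G.Adj u)).card : ℝ) := by
    have h3 := heigz u
    have h5 : (z u / ((Finset.univ.filter (G.Adj u)).card : ℝ)) * S'
        = (S' / ((Finset.univ.filter (G.Adj u)).card : ℝ)) * z u := by ring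
    have h6 : t * z u ≤ (((Finset.univ.filter (G.Adj u)).card : ℝ)
        + S' / ((Finset.univ.filter (G.Adj u)).card : ℝ)) * z u := by
      linarith [h3, h5, hsum]
    exact le_of_mul_le_mul_right h6 hzu0
  exact le_trans hkey (das_deg G hn u hud)
end

section
/- Let m, b, i and n be integers with m ≥ 2, b ≥ 1, b+1 ≤ i ≤ n/(m+1), and n ≥ max{(b²+2b+1)m, (2b+2)m²+(4b+1)m+2b−1}. Then ρ(K_{mi−1} ∨ (K_{n−(m+1)i+1} ∪ iK_1)) < n − b − 1. -/
open scoped Classical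

theorem arith_key (M B I N : ℝ) (hM : 2 ≤ M) (hB : 1 ≤ B) (hI : B + 1 ≤ I)
    (hIN : (M+1)*I ≤ N) (hn1 : (B^2+2*B+1)*M ≤ N)
    (hn2 : (2*B+2)*M^2+(4*B+1)*M+2*B-1 ≤ N) :
    (M*I-2)*(N-1) + (N-(M+1)*I+1)*(N-I-1) + I*(M*I-1) < (N-B-1)^2 := by
  have hP : 0 ≤ N - (M+1)*I := by linarith
  have hQ : 0 ≤ I - (B+1) := by linarith
  have hN0 : 0 < N := by nlinarith
  have ga : 0 < 2*N - 2*M*(B+1)^2 + B := by nlinarith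
  have h1 : 0 ≤ N - (2*B*(M+1)^2 - (M+1)) := by nlinarith
  have hh : 0 < N^2 - 2*B*N*(M+1)^2 + N*(M+1) + ((B+1)^2-1)*(M+1)^2 := by
    nlinarith [mul_nonneg hN0.le h1, sq_nonneg (M+1), mul_nonneg (by nlinarith : (0:ℝ) ≤ (B+1)^2-1) (by nlinarith : (0:ℝ) ≤ (M+1)^2)]
  have hg : 0 < 2*(I-B)*N - (2*M+1)*I^2 + I - 1 + (B+1)^2 := by
    rcases eq_or_lt_of_le hQ with h0 | h0
    · have : I = B + 1 := by linarith
      subst this; nlinarith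
    · have hR : 0 < N - (M+1)*(B+1) := by nlinarith
      have hpos : 0 < (2*(I-B)*N - (2*M+1)*I^2 + I - 1 + (B+1)^2) * ((N-(M+1)*(B+1))*(M+1)) := by
        have key : (2*(I-B)*N - (2*M+1)*I^2 + I - 1 + (B+1)^2) * ((N-(M+1)*(B+1))*(M+1))
            = (2*N - 2*M*(B+1)^2 + B)*((N-(M+1)*I)*(M+1))
              + (N^2 - 2*B*N*(M+1)^2 + N*(M+1) + ((B+1)^2-1)*(M+1)^2)*(I-(B+1))
              + (2*M+1)*(I-(B+1))*(N-(M+1)*I)*(N-(M+1)*(B+1)) := by ring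
        rw [key]
        have h2 := mul_nonneg (mul_nonneg (by linarith : (0:ℝ) ≤ 2*M+1) h0.le) (mul_nonneg hP hR.le)
        have h3 := mul_nonneg ga.le (mul_nonneg hP (by linarith : (0:ℝ) ≤ M+1))
        have h4 := mul_pos hh h0
        linarith [h2, h3, h4]
      have hden : 0 < (N-(M+1)*(B+1))*(M+1) := by nlinarith
      by_contra hc
      push_neg at hc
      nlinarith [mul_nonneg (neg_nonneg.2 hc) hden.le]
  nlinarith [hg]

lemma card_filter_val_lt (n k : ℕ) (hk : k ≤ n) :
    (Finset.univ.filter (fun u : Fin n => u.val < k)).card = k := by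
  rcases eq_or_lt_of_le hk with rfl | h
  · simp [Finset.filter_true_of_mem, Fin.is_lt]
  · have : (Finset.univ.filter (fun u : Fin n => u.val < k)) = Finset.Iio ⟨k, h⟩ := by
      ext u; simp [Finset.mem_Iio, Fin.lt_def]
    rw [this, Fin.card_Iio]

lemma sum_ite_val_lt (n k : ℕ) (hk : k ≤ n) (c : ℝ) :
    ∑ u : Fin n, (if u.val < k then c else 0) = k * c := by
  rw [← Finset.sum_filter]
  simp [Finset.sum_const, card_filter_val_lt n k hk]

lemma adjMat_nonneg {V : Type*} [Fintype V] (G : SimpleGraph V) (a b : V) :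
    0 ≤ adjMat G a b := by
  simp only [adjMat, Matrix.of_apply]; split_ifs <;> norm_num

lemma adjMat_le_one {V : Type*} [Fintype V] (G : SimpleGraph V) (a b : V) :
    adjMat G a b ≤ 1 := by
  simp only [adjMat, Matrix.of_apply]; split_ifs <;> norm_num

lemma adjMat_diag {V : Type*} [Fintype V] (G : SimpleGraph V) (a : V) :
    adjMat G a a = 0 := by
  simp [adjMat, Matrix.of_apply]

lemma adjMat_eq_zero {V : Type*} [Fintype V] (G : SimpleGraph V) {a b : V}
    (h : ¬ G.Adj a b) : adjMat G a b = 0 := by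
  simp [adjMat, Matrix.of_apply, h]

lemma row_bound (n s t : ℕ) (hs1 : 1 ≤ s) (ht1 : 1 ≤ t) (hstn : s + t + 1 ≤ n) (v : Fin n) :
    ∑ u, ∑ w, adjMat (Gstar n s t) v u * adjMat (Gstar n s t) u w
      ≤ ((s:ℝ)-1)*((n:ℝ)-1) + ((n:ℝ)-s-t)*((n:ℝ)-t-1) + (t:ℝ)*(s:ℝ) := by
  set G := Gstar n s t with hG
  set A := adjMat G with hA
  have htn : t ≤ n := by omega
  have hsnt : s < n - t := by omega
  have hntn : n - t < n := by omega
  have hsn : s < n := by omega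
  have hcast : ((n - t : ℕ) : ℝ) = (n : ℝ) - t := by
    push_cast [Nat.cast_sub htn]; try ring
  have hS1 : (1:ℝ) ≤ (s:ℝ) := by exact_mod_cast hs1
  have hT1 : (1:ℝ) ≤ (t:ℝ) := by exact_mod_cast ht1
  have hSTN : (s:ℝ) + t + 1 ≤ (n:ℝ) := by exact_mod_cast hstn
  have hAdj : ∀ a b : Fin n, G.Adj a b ↔
      (a ≠ b ∧ ((a:ℕ) < s ∨ (b:ℕ) < s ∨ ((a:ℕ) < n - t ∧ (b:ℕ) < n - t))) := fun a b => Iff.rfl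
  have hAvv : ∀ a : Fin n, A a a = 0 := fun a => adjMat_diag G a
  have hA0 : ∀ a b : Fin n, 0 ≤ A a b := fun a b => adjMat_nonneg G a b
  have hAle1 : ∀ a b : Fin n, A a b ≤ 1 := fun a b => adjMat_le_one G a b
  have hAz : ∀ a b : Fin n, ¬ G.Adj a b → A a b = 0 := fun a b h => adjMat_eq_zero G h
  set D : Fin n → ℝ := fun u =>
    if u.val < s then (n:ℝ)-1 else if u.val < n - t then (n:ℝ)-(t:ℝ)-1 else (s:ℝ) with hD
  have hD0 : ∀ u, 0 ≤ D u := by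
    intro u; simp only [hD]; split_ifs <;> [linarith; linarith; positivity]
  -- inner bound
  have inner : ∀ u : Fin n, (∑ w, A u w) ≤ D u := by
    intro u
    have hsum : (∑ w, A u w) = ((Finset.univ.filter (fun w => G.Adj u w)).card : ℝ) := by
      simp only [hA, adjMat, Matrix.of_apply]
      rw [Finset.sum_boole]
    rw [hsum]
    simp only [hD]
    by_cases h1 : u.val < s
    · rw [if_pos h1]
      have hsub : Finset.univ.filter (fun w => G.Adj u w) ⊆ Finset.univ.erase u := by
        intro w hw
        simp only [Finset.mem_filter] at hw
        exact Finset.mem_erase.2 ⟨fun h => ((hAdj u w).1 hw.2).1 h.symm, Finset.mem_univ w⟩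
      have := Finset.card_le_card hsub
      rw [Finset.card_erase_of_mem (Finset.mem_univ u), Finset.card_univ, Fintype.card_fin] at this
      calc ((Finset.univ.filter (fun w => G.Adj u w)).card : ℝ) ≤ ((n - 1 : ℕ) : ℝ) := by
            exact_mod_cast this
        _ = (n:ℝ) - 1 := by push_cast [Nat.cast_sub (by omega : 1 ≤ n)]; try ring
    · rw [if_neg h1]
      by_cases h2 : u.val < n - t
      · rw [if_pos h2]
        have hsub : Finset.univ.filter (fun w => G.Adj u w) ⊆
            (Finset.Iio (⟨n - t, hntn⟩ : Fin n)).erase u := by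
          intro w hw
          simp only [Finset.mem_filter] at hw
          obtain ⟨hne, hc⟩ := (hAdj u w).1 hw.2
          refine Finset.mem_erase.2 ⟨fun h => hne h.symm, Finset.mem_Iio.2 ?_⟩
          rw [Fin.lt_def]
          rcases hc with h | h | h
          · exact absurd h h1
          · exact h.trans hsnt
          · exact h.2
        have := Finset.card_le_card hsub
        rw [Finset.card_erase_of_mem (Finset.mem_Iio.2 (by rw [Fin.lt_def]; exact h2)),
          Fin.card_Iio] at this
        calc ((Finset.univ.filter (fun w => G.Adj u w)).card : ℝ) ≤ (((n - t : ℕ) - 1 : ℕ) : ℝ) := by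
              exact_mod_cast this
          _ = (n:ℝ) - t - 1 := by
              push_cast [Nat.cast_sub (by omega : 1 ≤ n - t), hcast]; try ring
      · rw [if_neg h2]
        have hsub : Finset.univ.filter (fun w => G.Adj u w) ⊆
            Finset.Iio (⟨s, hsn⟩ : Fin n) := by
          intro w hw
          simp only [Finset.mem_filter] at hw
          obtain ⟨hne, hc⟩ := (hAdj u w).1 hw.2
          refine Finset.mem_Iio.2 ?_
          rw [Fin.lt_def]
          rcases hc with h | h | h
          · exact absurd h h1
          · exact h
          · exact absurd h.1 h2
        have := Finset.card_le_card hsub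
        rw [Fin.card_Iio] at this
        exact_mod_cast this
  have hDdecomp : ∀ u : Fin n,
      D u = (s:ℝ) + (if u.val < n - t then (n:ℝ)-t-1-s else 0)
        + (if u.val < s then (t:ℝ) else 0) := by
    intro u
    simp only [hD]
    by_cases h1 : u.val < s
    · rw [if_pos h1, if_pos (h1.trans hsnt), if_pos h1]; try ring
    · rw [if_neg h1, if_neg h1]
      by_cases h2 : u.val < n - t
      · rw [if_pos h2, if_pos h2]; try ring
      · rw [if_neg h2, if_neg h2]; try ring
  have hsumD : ∑ u : Fin n, D u = (n:ℝ)*s + ((n:ℝ)-t)*((n:ℝ)-t-1-s) + (s:ℝ)*t := by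
    simp only [hDdecomp]
    rw [Finset.sum_add_distrib, Finset.sum_add_distrib,
      sum_ite_val_lt n (n-t) (by omega), sum_ite_val_lt n s (by omega),
      Finset.sum_const, Finset.card_univ, Fintype.card_fin, nsmul_eq_mul, hcast]
    try ring
  have step1 : ∑ u, ∑ w, A v u * A u w ≤ ∑ u, A v u * D u := by
    refine Finset.sum_le_sum fun u _ => ?_
    rw [← Finset.mul_sum]
    exact mul_le_mul_of_nonneg_left (inner u) (hA0 v u)
  refine step1.trans ?_
  by_cases hv1 : v.val < s
  · have step2 : ∑ u, A v u * D u ≤ (∑ u : Fin n, D u) - D v := by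
      rw [← Finset.sum_erase_add _ _ (Finset.mem_univ v), hAvv, zero_mul, add_zero]
      refine (Finset.sum_le_sum fun u _ => mul_le_of_le_one_left (hD0 u) (hAle1 v u)).trans ?_
      exact le_of_eq (Finset.sum_erase_eq_sub (Finset.mem_univ v))
    have hDv : D v = (n:ℝ)-1 := by simp only [hD]; rw [if_pos hv1]
    refine step2.trans ?_
    rw [hsumD, hDv]
    have : (n:ℝ)*s + ((n:ℝ)-t)*((n:ℝ)-t-1-s) + (s:ℝ)*t - ((n:ℝ)-1)
        = ((s:ℝ)-1)*((n:ℝ)-1) + ((n:ℝ)-s-t)*((n:ℝ)-t-1) + (t:ℝ)*(s:ℝ) := by ring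
    linarith
  · by_cases hv2 : v.val < n - t
    · -- middle case
      have step2 : ∑ u, A v u * D u
          = ∑ u ∈ (Finset.Iio (⟨n-t, hntn⟩ : Fin n)).erase v, A v u * D u := by
        symm
        refine Finset.sum_subset (Finset.subset_univ _) ?_
        intro u _ hu
        rcases eq_or_ne u v with rfl | hne
        · rw [hAvv, zero_mul]
        · have hu' : ¬ u.val < n - t := by
            by_contra hlt
            exact hu (Finset.mem_erase.2 ⟨hne, Finset.mem_Iio.2 (by rw [Fin.lt_def]; exact hlt)⟩)
          have hnadj : ¬ G.Adj v u := by
            rw [hAdj]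
            rintro ⟨-, h | h | h⟩
            · exact hv1 h
            · exact hu' (h.trans hsnt)
            · exact hu' h.2
          rw [hAz _ _ hnadj, zero_mul]
      have hsumIio : ∑ u ∈ Finset.Iio (⟨n-t, hntn⟩ : Fin n), D u
          = ((n:ℝ)-t)*((n:ℝ)-t-1) + (s:ℝ)*t := by
        have hcg : ∀ u ∈ Finset.Iio (⟨n-t, hntn⟩ : Fin n),
            D u = ((n:ℝ)-t-1) + (if u.val < s then (t:ℝ) else 0) := by
          intro u hu
          have hu' : u.val < n - t := Fin.lt_def.1 (Finset.mem_Iio.1 hu)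
          simp only [hD]
          by_cases h1 : u.val < s
          · rw [if_pos h1, if_pos h1]; try ring
          · rw [if_neg h1, if_pos hu', if_neg h1]; try ring
        rw [Finset.sum_congr rfl hcg, Finset.sum_add_distrib, Finset.sum_const, Fin.card_Iio]
        have hext : ∑ u ∈ Finset.Iio (⟨n-t, hntn⟩ : Fin n), (if u.val < s then (t:ℝ) else 0)
            = ∑ u : Fin n, (if u.val < s then (t:ℝ) else 0) := by
          refine Finset.sum_subset (Finset.subset_univ _) ?_
          intro u _ hu
          have hu' : ¬ u.val < n - t := fun h => hu (Finset.mem_Iio.2 (by rw [Fin.lt_def]; exact h))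
          rw [if_neg (fun h => hu' (h.trans hsnt))]
        rw [hext, sum_ite_val_lt n s (by omega), nsmul_eq_mul, hcast]
        try ring
      have step3 : ∑ u ∈ (Finset.Iio (⟨n-t, hntn⟩ : Fin n)).erase v, A v u * D u
          ≤ (∑ u ∈ Finset.Iio (⟨n-t, hntn⟩ : Fin n), D u) - D v := by
        refine (Finset.sum_le_sum fun u _ => mul_le_of_le_one_left (hD0 u) (hAle1 v u)).trans ?_
        exact le_of_eq (Finset.sum_erase_eq_sub (Finset.mem_Iio.2 (by rw [Fin.lt_def]; exact hv2)))
      have hDv : D v = (n:ℝ)-t-1 := by simp only [hD]; rw [if_neg hv1, if_pos hv2]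
      rw [step2]
      refine step3.trans ?_
      rw [hsumIio, hDv]
      nlinarith [mul_nonneg (by linarith : (0:ℝ) ≤ (s:ℝ)-1) (by linarith : (0:ℝ) ≤ (t:ℝ))]
    · -- last case
      have step2 : ∑ u, A v u * D u = ∑ u ∈ Finset.Iio (⟨s, hsn⟩ : Fin n), A v u * D u := by
        symm
        refine Finset.sum_subset (Finset.subset_univ _) ?_
        intro u _ hu
        have hu' : ¬ u.val < s := fun h => hu (Finset.mem_Iio.2 (by rw [Fin.lt_def]; exact h))
        have hnadj : ¬ G.Adj v u := by
          rw [hAdj]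
          rintro ⟨-, h | h | h⟩
          · exact hv1 h
          · exact hu' h
          · exact hv2 h.1
        rw [hAz _ _ hnadj, zero_mul]
      have step3 : ∑ u ∈ Finset.Iio (⟨s, hsn⟩ : Fin n), A v u * D u ≤ (s:ℝ)*((n:ℝ)-1) := by
        have : ∀ u ∈ Finset.Iio (⟨s, hsn⟩ : Fin n), A v u * D u ≤ (n:ℝ)-1 := by
          intro u hu
          have hu' : u.val < s := Fin.lt_def.1 (Finset.mem_Iio.1 hu)
          have hDu : D u = (n:ℝ)-1 := by simp only [hD]; rw [if_pos hu']
          rw [hDu]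
          exact mul_le_of_le_one_left (by linarith) (hAle1 v u)
        refine (Finset.sum_le_sum this).trans ?_
        rw [Finset.sum_const, Fin.card_Iio, nsmul_eq_mul]
      rw [step2]
      refine step3.trans ?_
      nlinarith [mul_nonneg (by linarith : (0:ℝ) ≤ (n:ℝ)-s-t-1) (by linarith : (0:ℝ) ≤ (n:ℝ)-t-1),
        mul_nonneg (by linarith : (0:ℝ) ≤ (s:ℝ)-1) (by linarith : (0:ℝ) ≤ (t:ℝ))]

lemma eig_sq_le {n : ℕ} (A : Matrix (Fin n) (Fin n) ℝ) (h0 : ∀ a b, 0 ≤ A a b) (W : ℝ)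
    (hW : ∀ v : Fin n, ∑ u, ∑ w, A v u * A u w ≤ W) (t : ℝ) (x : Fin n → ℝ)
    (hx : x ≠ 0) (he : A.mulVec x = t • x) : t ^ 2 ≤ W := by
  obtain ⟨j, hj⟩ := Function.ne_iff.mp hx
  obtain ⟨v, -, hv⟩ := Finset.exists_max_image Finset.univ (fun u => |x u|)
    ⟨j, Finset.mem_univ j⟩
  have hxv : 0 < |x v| := lt_of_lt_of_le (abs_pos.2 hj) (hv j (Finset.mem_univ j))
  have h2 : A.mulVec (A.mulVec x) = (t ^ 2) • x := by
    rw [he, Matrix.mulVec_smul, he, smul_smul, ← sq]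
  have h3 : t ^ 2 * x v = ∑ u, A v u * ∑ w, A u w * x w := by
    have h4 := congrFun h2 v
    simp only [Matrix.mulVec, dotProduct, Pi.smul_apply, smul_eq_mul] at h4
    rw [← h4]
  have chain : t ^ 2 * |x v| ≤ W * |x v| := by
    calc t ^ 2 * |x v| = |t ^ 2 * x v| := by
          rw [abs_mul, abs_of_nonneg (sq_nonneg t)]
      _ = |∑ u, A v u * ∑ w, A u w * x w| := by rw [h3]
      _ ≤ ∑ u, |A v u * ∑ w, A u w * x w| := Finset.abs_sum_le_sum_abs _ _
      _ ≤ ∑ u, A v u * ∑ w, A u w * |x w| := by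
          refine Finset.sum_le_sum fun u _ => ?_
          rw [abs_mul, abs_of_nonneg (h0 v u)]
          refine mul_le_mul_of_nonneg_left ?_ (h0 v u)
          calc |∑ w, A u w * x w| ≤ ∑ w, |A u w * x w| := Finset.abs_sum_le_sum_abs _ _
            _ = ∑ w, A u w * |x w| := by
                refine Finset.sum_congr rfl fun w _ => ?_
                rw [abs_mul, abs_of_nonneg (h0 u w)]
      _ ≤ ∑ u, A v u * ∑ w, A u w * |x v| := by
          refine Finset.sum_le_sum fun u _ => ?_
          refine mul_le_mul_of_nonneg_left (Finset.sum_le_sum fun w _ => ?_) (h0 v u)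
          exact mul_le_mul_of_nonneg_left (hv w (Finset.mem_univ w)) (h0 u w)
      _ = (∑ u, ∑ w, A v u * A u w) * |x v| := by
          rw [Finset.sum_mul]
          refine Finset.sum_congr rfl fun u _ => ?_
          rw [Finset.sum_mul, Finset.mul_sum]
          refine Finset.sum_congr rfl fun w _ => ?_
          ring
      _ ≤ W * |x v| := mul_le_mul_of_nonneg_right (hW v) (abs_nonneg _)
  exact le_of_mul_le_mul_right chain hxv

/-- `ρ(K_{mi−1} ∨ (K_{n−(m+1)i+1} ∪ iK_1)) < n − b − 1` in the stated range. -/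
theorem adjRad_G1_lt (m b i n : ℕ) (hm : 2 ≤ m) (hb : 1 ≤ b)
    (hi1 : b + 1 ≤ i) (hi2 : (i : ℝ) ≤ (n : ℝ) / (m + 1))
    (hn : max ((b ^ 2 + 2 * b + 1) * m) ((2 * b + 2) * m ^ 2 + (4 * b + 1) * m + 2 * b - 1) ≤ n) :
    adjRad (Gstar n (m * i - 1) i) < (n : ℝ) - b - 1 := by
  -- notation
  have him' : (i:ℝ) * ((m:ℝ)+1) ≤ (n:ℝ) := (le_div_iff₀ (by positivity : (0:ℝ) < (m:ℝ)+1)).mp hi2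
  have him : (m+1) * i ≤ n := by
    rw [mul_comm]
    exact_mod_cast him'
  have hi2nat : 2 ≤ i := by omega
  have hmi4 : 4 ≤ m * i := le_trans (by norm_num) (Nat.mul_le_mul hm hi2nat)
  have hmi1 : 1 ≤ m * i := by omega
  have hs1 : 1 ≤ m * i - 1 := by omega
  have hstn : (m * i - 1) + i + 1 ≤ n := by
    have h1 : (m+1) * i = m * i + i := by ring
    omega
  have npos : 0 < n := by omega
  have h3b : 3 * (b + 1) ≤ n := le_trans (Nat.mul_le_mul (by omega) hi1) him
  have hb1 : (0:ℝ) < (n:ℝ) - b - 1 := by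
    have : ((3 * (b+1) : ℕ) : ℝ) ≤ (n:ℝ) := by exact_mod_cast h3b
    push_cast at this
    linarith
  have hscast : ((m * i - 1 : ℕ) : ℝ) = (m:ℝ) * (i:ℝ) - 1 := by
    push_cast [Nat.cast_sub hmi1]
    ring
  set WR : ℝ := ((↑(m*i-1):ℝ)-1)*((n:ℝ)-1) + ((n:ℝ)-(↑(m*i-1):ℝ)-(i:ℝ))*((n:ℝ)-(i:ℝ)-1)
    + (i:ℝ)*(↑(m*i-1):ℝ) with hWR
  have hrow : ∀ v : Fin n, ∑ u, ∑ w,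
      adjMat (Gstar n (m*i-1) i) v u * adjMat (Gstar n (m*i-1) i) u w ≤ WR :=
    row_bound n (m*i-1) i hs1 (by omega) hstn
  have harith : WR < ((n:ℝ) - b - 1)^2 := by
    have hM : (2:ℝ) ≤ (m:ℝ) := by exact_mod_cast hm
    have hB : (1:ℝ) ≤ (b:ℝ) := by exact_mod_cast hb
    have hI : (b:ℝ) + 1 ≤ (i:ℝ) := by exact_mod_cast hi1
    have hIN : ((m:ℝ)+1) * (i:ℝ) ≤ (n:ℝ) := by linarith
    have hn1 : ((b:ℝ)^2 + 2*(b:ℝ) + 1) * (m:ℝ) ≤ (n:ℝ) := by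
      have h := le_trans (le_max_left _ _) hn
      have : (((b^2 + 2*b + 1) * m : ℕ) : ℝ) ≤ (n:ℝ) := by exact_mod_cast h
      push_cast at this
      linarith
    have hn2 : (2*(b:ℝ)+2) * (m:ℝ)^2 + (4*(b:ℝ)+1) * (m:ℝ) + 2*(b:ℝ) - 1 ≤ (n:ℝ) := by
      have h := le_trans (le_max_right _ _) hn
      have : (((2*b+2) * m^2 + (4*b+1) * m + 2*b - 1 : ℕ) : ℝ) ≤ (n:ℝ) := by exact_mod_cast h
      push_cast [Nat.cast_sub (by omega : 1 ≤ (2*b+2) * m^2 + (4*b+1) * m + 2*b)] at this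
      linarith
    have key := arith_key (m:ℝ) (b:ℝ) (i:ℝ) (n:ℝ) hM hB hI hIN hn1 hn2
    rw [hWR, hscast]
    have heq : ((m:ℝ)*(i:ℝ)-1-1)*((n:ℝ)-1) + ((n:ℝ)-((m:ℝ)*(i:ℝ)-1)-(i:ℝ))*((n:ℝ)-(i:ℝ)-1)
        + (i:ℝ)*((m:ℝ)*(i:ℝ)-1)
        = ((m:ℝ)*(i:ℝ)-2)*((n:ℝ)-1) + ((n:ℝ)-((m:ℝ)+1)*(i:ℝ)+1)*((n:ℝ)-(i:ℝ)-1)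
        + (i:ℝ)*((m:ℝ)*(i:ℝ)-1) := by ring
    rw [heq]
    exact key
  have hWR0 : 0 ≤ WR := by
    refine le_trans ?_ (hrow ⟨0, npos⟩)
    refine Finset.sum_nonneg fun u _ => Finset.sum_nonneg fun w _ => ?_
    exact mul_nonneg (adjMat_nonneg _ _ _) (adjMat_nonneg _ _ _)
  have hsqrt : Real.sqrt WR < (n:ℝ) - b - 1 := by
    rw [show (n:ℝ) - b - 1 = Real.sqrt (((n:ℝ) - b - 1)^2) from (Real.sqrt_sq hb1.le).symm]
    exact Real.sqrt_lt_sqrt hWR0 harith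
  refine lt_of_le_of_lt ?_ hsqrt
  rw [adjRad, maxEig]
  refine Real.sSup_le ?_ (Real.sqrt_nonneg WR)
  rintro r ⟨x, hx, he⟩
  have h2 : r ^ 2 ≤ WR :=
    eig_sq_le (adjMat (Gstar n (m*i-1) i)) (fun a c => adjMat_nonneg _ a c) WR hrow r x hx he
  calc r ≤ |r| := le_abs_self r
    _ = Real.sqrt (r^2) := (Real.sqrt_sq_eq_abs r).symm
    _ ≤ Real.sqrt WR := Real.sqrt_le_sqrt h2
end

section
/- Let m, b, i and n be integers with m ≥ 2, b ≥ 1, b+1 ≤ i ≤ n/(m+1), and n ≥ max{(b²+2b+1)m+b²−b, (2b+2)m²+(4b+1)m+2b−1}. Then q(K_{mi−1} ∨ (K_{n−(m+1)i+1} ∪ iK_1)) ≤ 2(n − b − 1). -/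
open scoped Classical
set_option maxHeartbeats 1000000

lemma sum_piece (n k l : ℕ) (hkl : k ≤ l) (hln : l ≤ n) (a b c : ℝ) :
    (∑ v : Fin n, (if (v : ℕ) < k then a else if (v : ℕ) < l then b else c))
      = (k : ℝ) * a + ((l : ℝ) - (k : ℝ)) * b + ((n : ℝ) - (l : ℝ)) * c := by
  rw [Fin.sum_univ_eq_sum_range (fun j => if j < k then a else if j < l then b else c)]
  rw [Finset.range_eq_Ico, ← Finset.sum_Ico_consecutive _ (Nat.zero_le l) hln,
      ← Finset.sum_Ico_consecutive _ (Nat.zero_le k) hkl]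
  have h1 : (∑ j ∈ Finset.Ico 0 k, (if j < k then a else if j < l then b else c)) = (k:ℝ) * a := by
    rw [Finset.sum_congr rfl (fun j hj => ?_)]
    · rw [Finset.sum_const, Nat.card_Ico, Nat.sub_zero, nsmul_eq_mul]
    · have := Finset.mem_Ico.mp hj
      simp only [if_pos this.2]
  have h2 : (∑ j ∈ Finset.Ico k l, (if j < k then a else if j < l then b else c)) = ((l:ℝ)-(k:ℝ)) * b := by
    rw [Finset.sum_congr rfl (fun j hj => ?_)]
    · rw [Finset.sum_const, Nat.card_Ico, nsmul_eq_mul, Nat.cast_sub hkl]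
    · have := Finset.mem_Ico.mp hj
      rw [if_neg (by omega), if_pos this.2]
  have h3 : (∑ j ∈ Finset.Ico l n, (if j < k then a else if j < l then b else c)) = ((n:ℝ)-(l:ℝ)) * c := by
    rw [Finset.sum_congr rfl (fun j hj => ?_)]
    · rw [Finset.sum_const, Nat.card_Ico, nsmul_eq_mul, Nat.cast_sub hln]
    · have := Finset.mem_Ico.mp hj
      rw [if_neg (by omega), if_neg (by omega)]
  rw [h1, h2, h3]

lemma sum_adj_eq {n : ℕ} (G : SimpleGraph (Fin n)) (u : Fin n) (g : Fin n → ℝ) (P : Fin n → Prop) [DecidablePred P]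
    (h : ∀ v, G.Adj u v ↔ (v ≠ u ∧ P v)) :
    (∑ v : Fin n, (if G.Adj u v then g v else 0))
      = (∑ v : Fin n, if P v then g v else 0) - (if P u then g u else 0) := by
  have key : ∀ v : Fin n, (if G.Adj u v then g v else 0)
      = (if P v then g v else 0) - (if v = u then (if P v then g v else 0) else 0) := by
    intro v
    by_cases hv : v = u
    · subst hv
      simp [h, SimpleGraph.irrefl]
    · by_cases hp : P v
      · simp [h, hv, hp]
      · simp [h, hv, hp]
  rw [Finset.sum_congr rfl (fun v _ => key v), Finset.sum_sub_distrib,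
    Finset.sum_ite_eq' Finset.univ u (fun v => if P v then g v else 0)]
  simp

lemma ncard_adj_eq_sum {n : ℕ} (G : SimpleGraph (Fin n)) (u : Fin n) :
    (({z | G.Adj u z}.ncard : ℕ) : ℝ) = ∑ v : Fin n, (if G.Adj u v then (1:ℝ) else 0) := by
  rw [Set.ncard_eq_toFinset_card', Set.toFinset_setOf, Finset.card_filter, Nat.cast_sum]
  exact Finset.sum_congr rfl (fun v _ => by split_ifs <;> simp
)

lemma eig_le {n : ℕ} (hn : 0 < n) (G : SimpleGraph (Fin n)) (C : ℝ) (w : Fin n → ℝ)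
    (hw : ∀ v, 0 < w v)
    (hrow : ∀ u : Fin n,
      (({z | G.Adj u z}.ncard : ℕ) : ℝ) * w u
        + (∑ v : Fin n, if G.Adj u v then w v else 0) ≤ C * w u) :
    qRad G ≤ C := by
  have hW0 : ∀ u : Fin n, 0 ≤ ∑ v : Fin n, (if G.Adj u v then w v else 0) := by
    intro u
    refine Finset.sum_nonneg fun v _ => ?_
    split_ifs
    · exact (hw v).le
    · exact le_refl 0
  have u0 : Fin n := ⟨0, hn⟩
  have hC : 0 ≤ C := by
    have h1 := hrow u0
    have h2 : 0 ≤ (({z | G.Adj u0 z}.ncard : ℕ) : ℝ) * w u0 :=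
      mul_nonneg (Nat.cast_nonneg _) (hw u0).le
    have h3 : 0 ≤ C * w u0 := le_trans (le_trans h2 (by linarith [hW0 u0])) h1
    nlinarith [hw u0]
  apply Real.sSup_le _ hC
  rintro t ⟨x, hx, hQx⟩
  -- the row equation
  have hrow_eq : ∀ u : Fin n, t * x u
      = (({z | G.Adj u z}.ncard : ℕ) : ℝ) * x u + ∑ v : Fin n, (if G.Adj u v then x v else 0) := by
    intro u
    have h0 := congrFun hQx u
    simp only [Matrix.mulVec, dotProduct, signlessLapMat, adjMat, Matrix.add_apply,
      Matrix.of_apply, Pi.smul_apply, smul_eq_mul] at h0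
    rw [← h0]
    simp only [add_mul, ite_mul, zero_mul, one_mul]
    rw [Finset.sum_add_distrib, Finset.sum_ite_eq Finset.univ u]
    simp
  obtain ⟨u, -, hu⟩ := Finset.exists_max_image Finset.univ (fun v => |x v| / w v)
    ⟨u0, Finset.mem_univ u0⟩
  have hxu : 0 < |x u| := by
    obtain ⟨v, hv⟩ : ∃ v, x v ≠ 0 := by
      by_contra h
      push_neg at h
      exact hx (funext h)
    have h1 : 0 < |x v| / w v := div_pos (abs_pos.mpr hv) (hw v)
    have h2 : 0 < |x u| / w u := lt_of_lt_of_le h1 (hu v (Finset.mem_univ v))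
    have h3 := mul_pos h2 (hw u)
    rwa [div_mul_cancel₀ _ (hw u).ne'] at h3
  set D : ℝ := (({z | G.Adj u z}.ncard : ℕ) : ℝ) with hD
  have hD0 : 0 ≤ D := Nat.cast_nonneg _
  have hDC : D ≤ C := by
    have h1 := hrow u
    have h2 : D * w u ≤ C * w u := by linarith [hW0 u]
    exact le_of_mul_le_mul_right (by linarith) (hw u)
  rcases le_or_gt t D with h | h
  · exact le_trans h hDC
  · -- cross inequality
    have hcross : ∀ v, |x v| * w u ≤ |x u| * w v := by
      intro v
      have := hu v (Finset.mem_univ v)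
      exact (div_le_div_iff₀ (hw v) (hw u)).mp this
    have hS : (t - D) * x u = ∑ v : Fin n, (if G.Adj u v then x v else 0) := by
      have := hrow_eq u
      linarith [this]
    have habs : |(t - D) * x u| * w u ≤ |x u| * ∑ v : Fin n, (if G.Adj u v then w v else 0) := by
      rw [hS]
      calc |∑ v : Fin n, (if G.Adj u v then x v else 0)| * w u
          ≤ (∑ v : Fin n, |if G.Adj u v then x v else 0|) * w u :=
            mul_le_mul_of_nonneg_right (Finset.abs_sum_le_sum_abs _ _) (hw u).le
        _ = ∑ v : Fin n, (|if G.Adj u v then x v else 0|) * w u := by rw [Finset.sum_mul]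
        _ ≤ ∑ v : Fin n, |x u| * (if G.Adj u v then w v else 0) := by
            refine Finset.sum_le_sum fun v _ => ?_
            split_ifs with hA
            · exact hcross v
            · simp
        _ = |x u| * ∑ v : Fin n, (if G.Adj u v then w v else 0) := by rw [Finset.mul_sum]
    have hWle : (∑ v : Fin n, (if G.Adj u v then w v else 0)) ≤ (C - D) * w u := by
      have := hrow u
      linarith
    have h2 : (t - D) * (|x u| * w u) ≤ (C - D) * (|x u| * w u) := by
      have e1 : |(t - D) * x u| = (t - D) * |x u| := by
        rw [abs_mul, abs_of_pos (by linarith : (0:ℝ) < t - D)]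
      have e2 : |x u| * ((C - D) * w u) = (C - D) * (|x u| * w u) := by ring
      calc (t - D) * (|x u| * w u) = |(t - D) * x u| * w u := by rw [e1]; ring
        _ ≤ |x u| * ∑ v : Fin n, (if G.Adj u v then w v else 0) := habs
        _ ≤ |x u| * ((C - D) * w u) :=
            mul_le_mul_of_nonneg_left hWle hxu.le
        _ = (C - D) * (|x u| * w u) := e2
    have h3 : t - D ≤ C - D := le_of_mul_le_mul_right h2 (mul_pos hxu (hw u))
    linarith

/-- `q(K_{mi−1} ∨ (K_{n−(m+1)i+1} ∪ iK_1)) ≤ 2(n − b − 1)` in the stated range. -/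
theorem qRad_G1_le (m b i n : ℕ) (hm : 2 ≤ m) (hb : 1 ≤ b)
    (hi1 : b + 1 ≤ i) (hi2 : (i : ℝ) ≤ (n : ℝ) / (m + 1))
    (hn : max ((b ^ 2 + 2 * b + 1) * m + b ^ 2 - b)
      ((2 * b + 2) * m ^ 2 + (4 * b + 1) * m + 2 * b - 1) ≤ n) :
    qRad (Gstar n (m * i - 1) i) ≤ 2 * ((n : ℝ) - b - 1) := by

  -- basic natural number facts
  have hn1 : (b ^ 2 + 2 * b + 1) * m + b ^ 2 - b ≤ n := le_trans (le_max_left _ _) hn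
  have hn2 : (2 * b + 2) * m ^ 2 + (4 * b + 1) * m + 2 * b - 1 ≤ n := le_trans (le_max_right _ _) hn
  have hbb : b ≤ b ^ 2 := by nlinarith
  have h2b : 1 ≤ 2 * b := by omega
  have hbig : (b ^ 2 + 2 * b + 1) * m ≤ (b ^ 2 + 2 * b + 1) * m + b ^ 2 - b := by omega
  have hmi2 : 4 ≤ m * i := by
    calc 4 = 2 * 2 := rfl
    _ ≤ m * i := Nat.mul_le_mul hm (by omega)
  have hmn : m * i + i ≤ n := by
    have h1 : (0:ℝ) < (m:ℝ) + 1 := by positivity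
    have h2 : ((i:ℝ)) * ((m:ℝ) + 1) ≤ (n:ℝ) := (le_div_iff₀ h1).mp hi2
    have h3 : ((m * i + i : ℕ) : ℝ) ≤ ((n : ℕ) : ℝ) := by push_cast; nlinarith
    exact_mod_cast h3
  have hn0 : 0 < n := by omega
  have hsnt : m * i - 1 ≤ n - i := by omega
  have hben : i ≤ n := by omega
  -- real versions
  set M : ℝ := (m : ℝ) with hM
  set B : ℝ := (b : ℝ) with hB
  set I : ℝ := (i : ℝ) with hI
  set N : ℝ := (n : ℝ) with hN
  have hMr : 2 ≤ M := by rw [hM]; exact_mod_cast hm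
  have hBr : 1 ≤ B := by rw [hB]; exact_mod_cast hb
  have hIr : B + 1 ≤ I := by rw [hB, hI]; exact_mod_cast hi1
  have hIN : (M + 1) * I ≤ N := by
    have : ((m * i + i : ℕ) : ℝ) ≤ ((n : ℕ) : ℝ) := by exact_mod_cast hmn
    push_cast at this
    nlinarith
  have hN1r : (B ^ 2 + 2 * B + 1) * M + (B ^ 2 - B) ≤ N := by
    have : (((b ^ 2 + 2 * b + 1) * m + b ^ 2 - b : ℕ) : ℝ) ≤ ((n : ℕ) : ℝ) := by
      exact_mod_cast hn1
    rw [Nat.cast_sub (by omega)] at this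
    push_cast at this
    nlinarith
  have hN2r : (2 * B + 2) * M ^ 2 + (4 * B + 1) * M + (2 * B - 1) ≤ N := by
    have : (((2 * b + 2) * m ^ 2 + (4 * b + 1) * m + 2 * b - 1 : ℕ) : ℝ) ≤ ((n : ℕ) : ℝ) := by
      exact_mod_cast hn2
    rw [Nat.cast_sub (by omega)] at this
    push_cast at this
    nlinarith
  have hsr : ((m * i - 1 : ℕ) : ℝ) = M * I - 1 := by
    rw [Nat.cast_sub (by omega)]
    push_cast
    ring
  have hnir : ((n - i : ℕ) : ℝ) = N - I := by
    rw [Nat.cast_sub hben]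
  -- handy real bounds
  have hMI3 : 3 ≤ M * I - 1 := by nlinarith
  have hNI : M * I - 1 ≤ N - I - 1 := by nlinarith
  have hNlarge : 2 * B + 2 ≤ N := by nlinarith
  -- the weight function
  set w : Fin n → ℝ := fun v =>
    if (v : ℕ) < m * i - 1 then N - 1
    else if (v : ℕ) < n - i then N - I - 1
    else M * I - 1 with hwdef
  have hwpos : ∀ v, 0 < w v := by
    intro v
    simp only [hwdef]
    split_ifs <;> nlinarith
  refine eig_le hn0 _ _ w hwpos ?_
  intro u
  set G := Gstar n (m * i - 1) i with hG
  have husum : ∀ (K : ℕ), (∑ v : Fin n, if (v : ℕ) < K then (1:ℝ) else 0)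
      = ∑ v : Fin n, (if (v : ℕ) < K then (1:ℝ) else if (v : ℕ) < K then 0 else 0) :=
    fun K => Finset.sum_congr rfl (fun v _ => by split_ifs <;> rfl)
  by_cases hu1 : (u : ℕ) < m * i - 1
  · -- class 1 : join vertices
    have hAdj : ∀ v, G.Adj u v ↔ (v ≠ u ∧ (v : ℕ) < n) := by
      intro v
      have hv := v.isLt
      constructor
      · rintro ⟨h1, h2⟩
        exact ⟨Ne.symm h1, by omega⟩
      · rintro ⟨h1, h2⟩
        exact ⟨Ne.symm h1, by omega⟩
    rw [ncard_adj_eq_sum, sum_adj_eq G u _ _ hAdj, sum_adj_eq G u w _ hAdj]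
    rw [husum n, sum_piece n n n le_rfl le_rfl 1 0 0]
    have hwsum : (∑ v : Fin n, if (v : ℕ) < n then w v else 0) = ∑ v : Fin n, w v :=
      Finset.sum_congr rfl (fun v _ => if_pos v.isLt)
    rw [hwsum]
    have : (∑ v : Fin n, w v)
        = ((m * i - 1 : ℕ) : ℝ) * (N - 1) + (((n - i : ℕ) : ℝ) - ((m * i - 1 : ℕ) : ℝ)) * (N - I - 1)
          + (N - ((n - i : ℕ) : ℝ)) * (M * I - 1) := by
      rw [hwdef]
      exact sum_piece n (m * i - 1) (n - i) hsnt (by omega) (N - 1) (N - I - 1) (M * I - 1)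
    have hwu : w u = N - 1 := by simp only [hwdef]; rw [if_pos hu1]
    have hc1 : (if (u : ℕ) < n then (1:ℝ) else 0) = 1 := if_pos u.isLt
    have hc2 : (if (u : ℕ) < n then w u else 0) = N - 1 := by rw [if_pos u.isLt, hwu]
    rw [this, hsr, hnir, hc1, hc2, hwu]
    clear_value M B I N
    rw [← hN]
    clear * - hMr hBr hIr hIN hN1r hN2r hMI3 hNI hNlarge
    nlinarith [mul_nonneg (by nlinarith : (0:ℝ) ≤ I - B - 1) (by nlinarith : (0:ℝ) ≤ N - (M+1)*I),
      sq_nonneg (I - B - 1), sq_nonneg (N - (M+1)*I),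
      mul_nonneg (by nlinarith : (0:ℝ) ≤ B-1) (by nlinarith : (0:ℝ) ≤ M-2)]
  · by_cases hu2 : (u : ℕ) < n - i
    · -- class 2 : big clique vertices
      have hAdj : ∀ v, G.Adj u v ↔ (v ≠ u ∧ (v : ℕ) < n - i) := by
        intro v
        have hv := v.isLt
        constructor
        · rintro ⟨h1, h2⟩
          exact ⟨Ne.symm h1, by omega⟩
        · rintro ⟨h1, h2⟩
          exact ⟨Ne.symm h1, by omega⟩
      rw [ncard_adj_eq_sum, sum_adj_eq G u _ _ hAdj, sum_adj_eq G u w _ hAdj]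
      rw [husum (n - i), sum_piece n (n - i) (n - i) le_rfl (by omega) 1 0 0]
      have hwsum : (∑ v : Fin n, if (v : ℕ) < n - i then w v else 0)
          = ∑ v : Fin n, (if (v : ℕ) < m * i - 1 then N - 1 else if (v : ℕ) < n - i then N - I - 1 else 0) := by
        refine Finset.sum_congr rfl (fun v _ => ?_)
        simp only [hwdef]
        split_ifs <;> first | rfl | omega
      have hwu : w u = N - I - 1 := by simp only [hwdef]; rw [if_neg hu1, if_pos hu2]
      have hc1 : (if (u : ℕ) < n - i then (1:ℝ) else 0) = 1 := if_pos hu2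
      have hc2 : (if (u : ℕ) < n - i then w u else 0) = N - I - 1 := by rw [if_pos hu2, hwu]
      rw [hwsum, sum_piece n (m * i - 1) (n - i) hsnt (by omega) (N - 1) (N - I - 1) 0]
      rw [hsr, hnir, hc1, hc2, hwu]
      clear_value M B I N
      rw [← hN]
      clear * - hMr hBr hIr hIN hN1r hN2r hMI3 hNI hNlarge
      nlinarith [mul_nonneg (by nlinarith : (0:ℝ) ≤ I - B - 1) (by nlinarith : (0:ℝ) ≤ N - (M+1)*I),
        sq_nonneg (I - B - 1), sq_nonneg (N - (M+1)*I),
        mul_nonneg (by nlinarith : (0:ℝ) ≤ B-1) (by nlinarith : (0:ℝ) ≤ M-2),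
        mul_nonneg (mul_nonneg (by nlinarith : (0:ℝ) ≤ I) (by nlinarith : (0:ℝ) ≤ I)) (by nlinarith : (0:ℝ) ≤ M-1),
        mul_nonneg (by nlinarith : (0:ℝ) ≤ I) (by nlinarith : (0:ℝ) ≤ B-1)]
    · -- class 3 : independent vertices
      have hAdj : ∀ v, G.Adj u v ↔ (v ≠ u ∧ (v : ℕ) < m * i - 1) := by
        intro v
        have hv := v.isLt
        constructor
        · rintro ⟨h1, h2⟩
          exact ⟨Ne.symm h1, by omega⟩
        · rintro ⟨h1, h2⟩
          exact ⟨Ne.symm h1, by omega⟩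
      rw [ncard_adj_eq_sum, sum_adj_eq G u _ _ hAdj, sum_adj_eq G u w _ hAdj]
      rw [husum (m * i - 1), sum_piece n (m * i - 1) (m * i - 1) le_rfl (by omega) 1 0 0]
      have hwsum : (∑ v : Fin n, if (v : ℕ) < m * i - 1 then w v else 0)
          = ∑ v : Fin n, (if (v : ℕ) < m * i - 1 then N - 1 else if (v : ℕ) < m * i - 1 then 0 else 0) := by
        refine Finset.sum_congr rfl (fun v _ => ?_)
        simp only [hwdef]
        split_ifs <;> rfl
      have hwu : w u = M * I - 1 := by simp only [hwdef]; rw [if_neg hu1, if_neg hu2]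
      have hc1 : (if (u : ℕ) < m * i - 1 then (1:ℝ) else 0) = 0 := if_neg hu1
      have hc2 : (if (u : ℕ) < m * i - 1 then w u else 0) = 0 := if_neg hu1
      rw [hwsum, sum_piece n (m * i - 1) (m * i - 1) le_rfl (by omega) (N - 1) 0 0]
      rw [hsr, hc1, hc2, hwu]
      clear_value M B I N
      rw [← hN]
      clear * - hMr hBr hIr hIN hN1r hN2r hMI3 hNI hNlarge
      have hE3 : M * I + 2 * B ≤ N := by
        nlinarith [mul_nonneg (by nlinarith : (0:ℝ) ≤ M) (by nlinarith : (0:ℝ) ≤ N - (M+1)*I)]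
      nlinarith [hMI3, hE3]
end

section
/- Let m, b and n be integers with m ≥ 2, b ≥ 1 and n ≥ (2b+2)m² + (4b+1)m + 2b − 1. Then q(K_{n−⌈(n+1)/(m+1)⌉} ∨ ⌈(n+1)/(m+1)⌉K_1) < 2(n − b − 1). -/
open scoped Classical

lemma key_row_eq {n : ℕ} (G : SimpleGraph (Fin n)) (x : Fin n → ℝ) (lam : ℝ)
    (hx : (signlessLapMat G).mulVec x = lam • x) (i : Fin n) :
    lam * x i = ({w | G.Adj i w}.ncard : ℝ) * x i
      + ∑ j ∈ Finset.univ.filter (fun j => G.Adj i j), x j := by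
  have h := congrFun hx i
  simp only [signlessLapMat, adjMat, Matrix.mulVec, dotProduct, Matrix.add_apply,
    Matrix.of_apply, Pi.smul_apply, smul_eq_mul, add_mul, ite_mul, one_mul, zero_mul,
    Finset.sum_add_distrib, Finset.sum_ite_eq, Finset.mem_univ, if_true,
    ← Finset.sum_filter] at h
  rw [← h]

lemma count_lt {n : ℕ} (s' : ℕ) : ({w : Fin n | (w:ℕ) < s'}).ncard = min s' n := by
  rw [Set.ncard_eq_toFinset_card', Set.toFinset_setOf, Finset.card_filter,
    Fin.sum_univ_eq_sum_range (fun i => if i < s' then 1 else 0), ← Finset.card_filter]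
  have : Finset.filter (fun i => i < s') (Finset.range n) = Finset.range (min s' n) := by
    ext a; simp; omega
  rw [this, Finset.card_range]

lemma count_ne {n : ℕ} (i : Fin n) : ({w : Fin n | w ≠ i}).ncard = n - 1 := by
  rw [Set.ncard_eq_toFinset_card']
  simp [Finset.filter_ne', Finset.card_erase_of_mem]

lemma card_filter_lt {n : ℕ} (s' : ℕ) :
    (Finset.univ.filter (fun j : Fin n => (j:ℕ) < s')).card = min s' n := by
  rw [Finset.card_filter,
    Fin.sum_univ_eq_sum_range (fun i => if i < s' then 1 else 0), ← Finset.card_filter]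
  have : Finset.filter (fun i => i < s') (Finset.range n) = Finset.range (min s' n) := by
    ext a; simp; omega
  rw [this, Finset.card_range]

lemma final_contra (m b n T : ℕ) (lam : ℝ) 
    (hb' : (1:ℝ) ≤ b) (hm' : (2:ℝ) ≤ m)
    (hr1 : (n:ℝ)+1 ≤ ((m:ℝ)+1)*T) (hrTlow : (b:ℝ)*m+3*(b:ℝ)+m+2 ≤ T) (hrTn : (T:ℝ) ≤ n)
    (hcon : 2*((n:ℝ)-b-1) - 1/2 < lam)
    (heq : (lam - ((n:ℝ)-2) - ((n:ℝ)-T)) * (lam - ((n:ℝ)-T)) = ((n:ℝ)-T)*T) : False := by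
  have hA0 : (0:ℝ) < (T:ℝ) - 2*b - 1/2 := by nlinarith
  have hA : (T:ℝ) - 2*b - 1/2 < lam - ((n:ℝ)-2) - ((n:ℝ)-T) := by nlinarith
  have hB0 : (0:ℝ) < (n:ℝ) + T - 2*b - 5/2 := by nlinarith
  have hB : (n:ℝ) + T - 2*b - 5/2 < lam - ((n:ℝ)-T) := by nlinarith
  have hprod : ((T:ℝ) - 2*b - 1/2) * ((n:ℝ) + T - 2*b - 5/2)
      < (lam - ((n:ℝ)-2) - ((n:ℝ)-T)) * (lam - ((n:ℝ)-T)) :=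
    mul_lt_mul'' hA hB (le_of_lt hA0) (le_of_lt hB0)
  rw [heq] at hprod
  nlinarith [mul_pos hA0 hB0, sq_nonneg ((T:ℝ) - ((b:ℝ)*m+3*b+m+2)),
    mul_le_mul_of_nonneg_left hrTlow (show (0:ℝ) ≤ 2*(T:ℝ) by positivity)]

lemma hbm_aux (b m : ℕ) (hb' : (1:ℝ) ≤ b) (hm' : (2:ℝ) ≤ m) : (2:ℝ) ≤ (b:ℝ)*m := by
  nlinarith

lemma eig_bound (m b n T s : ℕ) (lam : ℝ) (x : Fin n → ℝ) (G : SimpleGraph (Fin n))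
    (hadj : ∀ u v : Fin n, G.Adj u v ↔ u ≠ v ∧ ((u:ℕ) < s ∨ (v:ℕ) < s))
    (hsT : s + T = n)
    (hb' : (1:ℝ) ≤ b) (hm' : (2:ℝ) ≤ m)
    (hr1 : (n:ℝ)+1 ≤ ((m:ℝ)+1)*T)
    (hrTlow : (b:ℝ)*m+3*(b:ℝ)+m+2 ≤ T)
    (hrTn : (T:ℝ) ≤ n)
    (hr2b2 : 2*(b:ℝ)+2 ≤ n)
    (hx0 : x ≠ 0) (hx : (signlessLapMat G).mulVec x = lam • x)
    (hcon : 2*((n:ℝ)-b-1) - 1/2 < lam) : False := by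
  have hsn : s ≤ n := by omega
  have hsr : (s:ℝ) = (n:ℝ) - T := by
    have : (s:ℝ) + T = n := by exact_mod_cast hsT
    linarith
  -- neighbor sets and degrees
  have hdegS : ∀ i : Fin n, (i:ℕ) < s → ({w | G.Adj i w}.ncard : ℝ) = (n:ℝ) - 1 := by
    intro i hi
    have hset : {w | G.Adj i w} = {w : Fin n | w ≠ i} := by
      ext w
      simp only [Set.mem_setOf_eq, hadj, ne_eq]
      constructor
      · rintro ⟨h, -⟩
        intro e; exact h e.symm
      · intro h; exact ⟨fun e => h e.symm, Or.inl hi⟩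
    rw [hset, count_ne]
    have h1n : 1 ≤ n := by omega
    push_cast [Nat.cast_sub h1n]
    ring
  have hdegT : ∀ i : Fin n, ¬ (i:ℕ) < s → ({w | G.Adj i w}.ncard : ℝ) = (s:ℝ) := by
    intro i hi
    have hset : {w | G.Adj i w} = {w : Fin n | (w:ℕ) < s} := by
      ext w
      simp only [Set.mem_setOf_eq, hadj, ne_eq]
      constructor
      · rintro ⟨h, hc⟩
        rcases hc with h' | h'
        · exact absurd h' hi
        · exact h'
      · intro h
        refine ⟨?_, Or.inr h⟩
        intro e
        rw [e] at hi
        exact hi h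
    rw [hset, count_lt, min_eq_left hsn]
  have key := key_row_eq G x lam hx
  set Fs : Finset (Fin n) := Finset.univ.filter (fun j : Fin n => (j:ℕ) < s) with hFs
  have cardFs : Fs.card = s := by rw [hFs, card_filter_lt, min_eq_left hsn]
  have cardFt : (Finset.univ \ Fs).card = T := by
    rw [Finset.card_sdiff_of_subset (Finset.subset_univ Fs), cardFs, Finset.card_univ,
      Fintype.card_fin]
    omega
  set σ : ℝ := ∑ j, x j with hσdef
  set σS : ℝ := ∑ j ∈ Fs, x j with hσSdef
  have hbm := hbm_aux b m hb' hm'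
  have hg1 : 0 < lam - ((n:ℝ)-2) := by linarith
  have hg2 : 0 < lam - (s:ℝ) := by rw [hsr]; linarith
  -- row equations
  have eqS : ∀ i : Fin n, (i:ℕ) < s → (lam - ((n:ℝ)-2)) * x i = σ := by
    intro i hi
    have hfilt : Finset.univ.filter (fun j => G.Adj i j) = Finset.univ.erase i := by
      ext j
      simp only [Finset.mem_filter, Finset.mem_univ, true_and, Finset.mem_erase, hadj, ne_eq]
      constructor
      · rintro ⟨h, -⟩; exact ⟨fun e => h e.symm, trivial⟩
      · rintro ⟨h, -⟩; exact ⟨fun e => h e.symm, Or.inl hi⟩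
    have hsum : ∑ j ∈ Finset.univ.filter (fun j => G.Adj i j), x j = σ - x i := by
      rw [hfilt, Finset.sum_erase_eq_sub (Finset.mem_univ i)]
    have hk := key i
    rw [hsum, hdegS i hi] at hk
    linarith
  have eqT : ∀ i : Fin n, ¬ (i:ℕ) < s → (lam - (s:ℝ)) * x i = σS := by
    intro i hi
    have hfilt : Finset.univ.filter (fun j => G.Adj i j) = Fs := by
      ext j
      simp only [Finset.mem_filter, Finset.mem_univ, true_and, hFs, hadj, ne_eq]
      constructor
      · rintro ⟨h, hc⟩
        rcases hc with h' | h'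
        · exact absurd h' hi
        · exact h'
      · intro h
        refine ⟨?_, Or.inr h⟩
        intro e
        rw [e] at hi
        exact hi h
    have hk := key i
    rw [hfilt, hdegT i hi, ← hσSdef] at hk
    linarith
  -- summed equations
  have sumS : (lam - ((n:ℝ)-2)) * σS = (s:ℝ) * σ := by
    rw [hσSdef, Finset.mul_sum]
    rw [Finset.sum_congr rfl (fun i hi => eqS i (by simpa [hFs] using hi))]
    rw [Finset.sum_const, cardFs, nsmul_eq_mul]
  have sumT : (lam - (s:ℝ)) * (σ - σS) = (T:ℝ) * σS := by
    have hsd : σ - σS = ∑ j ∈ Finset.univ \ Fs, x j := by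
      rw [Finset.sum_sdiff_eq_sub (Finset.subset_univ Fs)]
    rw [hsd, Finset.mul_sum]
    rw [Finset.sum_congr rfl (fun i hi => eqT i (by
      simp only [Finset.mem_sdiff, Finset.mem_univ, true_and, hFs, Finset.mem_filter] at hi
      tauto))]
    rw [Finset.sum_const, cardFt, nsmul_eq_mul]
  -- sigma_S ≠ 0
  have hσS0 : σS ≠ 0 := by
    intro h0
    apply hx0
    have hxT : ∀ i : Fin n, ¬ (i:ℕ) < s → x i = 0 := by
      intro i hi
      have := eqT i hi
      rw [h0] at this
      exact (mul_eq_zero.mp this).resolve_left (ne_of_gt hg2)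
    have hσT0 : σ - σS = 0 := by
      rw [(Finset.sum_sdiff_eq_sub (f := x) (Finset.subset_univ Fs)).symm]
      apply Finset.sum_eq_zero
      intro i hi
      simp only [Finset.mem_sdiff, Finset.mem_univ, true_and, hFs, Finset.mem_filter] at hi
      exact hxT i (by tauto)
    have hσ0 : σ = 0 := by linarith
    funext i
    by_cases hi : (i:ℕ) < s
    · have := eqS i hi
      rw [hσ0] at this
      have := (mul_eq_zero.mp this).resolve_left (ne_of_gt hg1)
      simpa using this
    · simpa using hxT i hi
  have hσT0 : σ - σS ≠ 0 := by
    intro h0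
    rw [h0, mul_zero] at sumT
    have hTpos : (0:ℝ) < T := by linarith
    exact hσS0 (by
      rcases mul_eq_zero.mp sumT.symm with h | h
      · exact absurd h (ne_of_gt hTpos)
      · exact h)
  -- the quadratic identity
  have e1 : (lam - ((n:ℝ)-2) - s) * σS = (s:ℝ) * (σ - σS) := by
    linear_combination sumS
  have e3 : ((lam - ((n:ℝ)-2) - s) * (lam - s) - (s:ℝ)*T) * (σS*(σ - σS)) = 0 := by
    linear_combination (lam - (s:ℝ))*(σ - σS) * e1 + (s:ℝ)*(σ - σS) * sumT
  have heq : (lam - ((n:ℝ)-2) - s) * (lam - s) = (s:ℝ)*T := by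
    rcases mul_eq_zero.mp e3 with h | h
    · linarith [sub_eq_zero.mp h]
    · exact absurd h (mul_ne_zero hσS0 hσT0)
  -- final numeric contradiction
  rw [hsr] at heq
  exact final_contra m b n T lam hb' hm' hr1 hrTlow hrTn hcon heq


/-- `q(K_{n−⌈(n+1)/(m+1)⌉} ∨ ⌈(n+1)/(m+1)⌉K_1) < 2(n − b − 1)`. Here
`⌈(n+1)/(m+1)⌉ = (n + m + 1)/(m + 1)` using natural division. -/
theorem qRad_G2_lt (m b n : ℕ) (hm : 2 ≤ m) (hb : 1 ≤ b)
    (hn : (2 * b + 2) * m ^ 2 + (4 * b + 1) * m + 2 * b - 1 ≤ n) :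
    qRad (Gstar n (n - (n + m + 1) / (m + 1)) ((n + m + 1) / (m + 1))) <
      2 * ((n : ℝ) - b - 1) := by
  unfold qRad maxEig
  set T := (n + m + 1) / (m + 1) with hT
  set s := n - T with hs
  -- natural number facts
  have hmod := Nat.div_add_mod (n+m+1) (m+1)
  rw [← hT] at hmod
  have hlt := Nat.mod_lt (n+m+1) (show 0 < m+1 by omega)
  have h1 : n + 1 ≤ (m+1)*T := by omega
  have h2 : (m+1)*T ≤ n+m+1 := by omega
  have hn' : (2*b+2)*m^2 + (4*b+1)*m + 2*b ≤ n + 1 := by omega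
  have hkey : (b*m+3*b+m+2) * (m+1) ≤ n+1 := by nlinarith
  have hTlow : b*m+3*b+m+2 ≤ T := by
    by_contra hc
    push_neg at hc
    have : (m+1)*T < (m+1)*(b*m+3*b+m+2) :=
      Nat.mul_lt_mul_of_le_of_lt (le_refl _) hc (by omega)
    nlinarith
  have hmn : m ≤ n := by nlinarith
  have h3 : 3*T ≤ (m+1)*T := Nat.mul_le_mul_right T (by omega)
  have hTn : T ≤ n := by omega
  have h2b2 : 2*b+2 ≤ n := by nlinarith
  have hsT : s + T = n := by omega
  -- real casts
  have hb' : (1:ℝ) ≤ b := by exact_mod_cast hb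
  have hm' : (2:ℝ) ≤ m := by exact_mod_cast hm
  have hr1 : (n:ℝ)+1 ≤ ((m:ℝ)+1)*T := by exact_mod_cast h1
  have hrTlow : (b:ℝ)*m+3*(b:ℝ)+m+2 ≤ T := by exact_mod_cast hTlow
  have hrTn : (T:ℝ) ≤ n := by exact_mod_cast hTn
  have hr2b2 : 2*(b:ℝ)+2 ≤ n := by exact_mod_cast h2b2
  set G := Gstar n s T with hG
  -- adjacency characterization
  have hadj : ∀ u v : Fin n, G.Adj u v ↔ u ≠ v ∧ ((u:ℕ) < s ∨ (v:ℕ) < s) := by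
    intro u v
    show (u ≠ v ∧ ((u:ℕ) < s ∨ (v:ℕ) < s ∨ ((u:ℕ) < n - T ∧ (v:ℕ) < n - T))) ↔ _
    rw [← hs]
    tauto
  have hub : ∀ lam : ℝ, (∃ x : Fin n → ℝ, x ≠ 0 ∧ (signlessLapMat G).mulVec x = lam • x) →
      lam ≤ 2*((n:ℝ)-b-1) - 1/2 := by
    rintro lam ⟨x, hx0, hx⟩
    by_contra hcon
    push_neg at hcon
    exact eig_bound m b n T s lam x G hadj hsT hb' hm' hr1 hrTlow hrTn hr2b2 hx0 hx hcon
  rcases Set.eq_empty_or_nonempty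
      {t : ℝ | ∃ x : Fin n → ℝ, x ≠ 0 ∧ (signlessLapMat G).mulVec x = t • x} with hS | hS
  · rw [hS, Real.sSup_empty]
    linarith
  · have := csSup_le hS (fun lam hlam => hub lam hlam)
    linarith
end

section
/- Let m, b and n be integers with m ≥ 2, b ≥ 1 and n ≥ 2b²m + b² − b + 1 (so in particular n ≥ (m+1)b). Then the Wiener index of G_* = K_{mb−1} ∨ (K_{n−(m+1)b+1} ∪ bK_1) satisfies 2W(G_*) = n² + (2b−1)n − 2b²m − b² + b, and consequently μ(G_*) > n + 2b − 2. -/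
open scoped Classical

open scoped InnerProductSpace
open Finset
-- counting lemma on f
lemma auxSumF (n s t : ℕ) (hs : 1 ≤ s) (hstn : s + t ≤ n) :
    (∑ i ∈ range n, ∑ j ∈ range n,
      (if i = j then 0 else if (i < s ∨ j < s ∨ (i < n - t ∧ j < n - t)) then 1 else 2))
      + n + 2*t*s + t*t + t = n*n + 2*t*n := by
  set f : ℕ → ℕ → ℕ := fun i j =>
    (if i = j then 0 else if (i < s ∨ j < s ∨ (i < n - t ∧ j < n - t)) then 1 else 2) with hfdef
  set F : ℕ → ℕ := fun i => ∑ j ∈ range n, f i j with hFdef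
  have hind : ∀ i ∈ range n, ∑ j ∈ range n, (if i = j then (1:ℕ) else 0) = 1 := by
    intro i hi
    rw [Finset.sum_ite_eq (range n) i (fun _ => (1:ℕ))]
    simp [hi]
  have hind2 : ∀ a : ℕ, a ≤ n → ∑ j ∈ range n, (if a ≤ j then (1:ℕ) else 0) = n - a := by
    intro a ha
    rw [← Finset.sum_filter]
    have : (range n).filter (fun j => a ≤ j) = Ico a n := by
      ext j; simp [Finset.mem_Ico]; omega
    simp [this]
  have hFA : ∀ i ∈ Ico 0 s, F i + 1 = n := by
    intro i hi
    simp only [Finset.mem_Ico] at hi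
    have : F i + ∑ j ∈ range n, (if i = j then (1:ℕ) else 0) = ∑ j ∈ range n, 1 := by
      rw [hFdef, ← Finset.sum_add_distrib]
      apply Finset.sum_congr rfl
      intro j hj
      simp only [hfdef]
      split_ifs <;> omega
    rw [hind i (by simp; omega)] at this
    simpa using this
  have hFB : ∀ i ∈ Ico s (n - t), F i + 1 = n + t := by
    intro i hi
    simp only [Finset.mem_Ico] at hi
    have : F i + ∑ j ∈ range n, (if i = j then (1:ℕ) else 0)
        = ∑ j ∈ range n, (1 + if n - t ≤ j then (1:ℕ) else 0) := by
      rw [hFdef, ← Finset.sum_add_distrib]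
      apply Finset.sum_congr rfl
      intro j hj
      simp only [Finset.mem_range] at hj
      simp only [hfdef]
      split_ifs <;> omega
    rw [hind i (by simp; omega), Finset.sum_add_distrib, hind2 (n - t) (by omega)] at this
    simp only [Finset.sum_const, Finset.card_range, smul_eq_mul, mul_one] at this
    omega
  have hFC : ∀ i ∈ Ico (n - t) n, F i + 2 + s = 2 * n := by
    intro i hi
    simp only [Finset.mem_Ico] at hi
    have : F i + ∑ j ∈ range n, (if i = j then (2:ℕ) else 0)
        = ∑ j ∈ range n, (1 + if s ≤ j then (1:ℕ) else 0) := by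
      rw [hFdef, ← Finset.sum_add_distrib]
      apply Finset.sum_congr rfl
      intro j hj
      simp only [Finset.mem_range] at hj
      simp only [hfdef]
      split_ifs <;> omega
    have h2 : ∑ j ∈ range n, (if i = j then (2:ℕ) else 0) = 2 := by
      rw [Finset.sum_ite_eq (range n) i (fun _ => (2:ℕ))]
      simp [hi.2]
    rw [h2, Finset.sum_add_distrib, hind2 s (by omega)] at this
    simp only [Finset.sum_const, Finset.card_range, smul_eq_mul, mul_one] at this
    omega
  have hsplit1 : ∑ i ∈ Ico 0 s, F i + ∑ i ∈ Ico s (n-t), F i = ∑ i ∈ Ico 0 (n-t), F i :=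
    Finset.sum_Ico_consecutive F (by omega) (by omega)
  have hsplit2 : ∑ i ∈ Ico 0 (n-t), F i + ∑ i ∈ Ico (n-t) n, F i = ∑ i ∈ Ico 0 n, F i :=
    Finset.sum_Ico_consecutive F (by omega) (by omega)
  have hA : ∑ i ∈ Ico 0 s, F i + s = s * n := by
    have := Finset.sum_congr rfl hFA
    rw [Finset.sum_add_distrib] at this
    simp only [Finset.sum_const, Nat.card_Ico, smul_eq_mul, mul_one, Nat.sub_zero] at this
    omega
  have hB : ∑ i ∈ Ico s (n-t), F i + (n - t - s) = (n - t - s) * (n + t) := by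
    have := Finset.sum_congr rfl hFB
    rw [Finset.sum_add_distrib] at this
    simp only [Finset.sum_const, Nat.card_Ico, smul_eq_mul, mul_one] at this
    omega
  have hC : ∑ i ∈ Ico (n-t) n, F i + t * (2 + s) = t * (2 * n) := by
    have := Finset.sum_congr rfl hFC
    rw [Finset.sum_add_distrib, Finset.sum_add_distrib] at this
    simp only [Finset.sum_const, Nat.card_Ico, smul_eq_mul, mul_one] at this
    have hcard : n - (n - t) = t := by omega
    rw [hcard] at this
    -- this : ∑ F + (t*2 + t*s) = t * (2*n)  roughly
    nlinarith [this]
  have htot : ∑ i ∈ range n, F i = ∑ i ∈ Ico 0 s, F i + ∑ i ∈ Ico s (n-t), F i + ∑ i ∈ Ico (n-t) n, F i := by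
    rw [Finset.range_eq_Ico]
    omega
  show (∑ i ∈ range n, F i) + n + 2*t*s + t*t + t = n*n + 2*t*n
  rw [htot]
  zify at hA hB hC ⊢
  have hnts : ((n - t - s : ℕ) : ℤ) = (n : ℤ) - t - s := by
    push_cast [Nat.sub_sub]
    rw [Nat.cast_sub (by omega)]
    push_cast
    ring
  rw [hnts] at hB
  nlinarith [hA, hB, hC]


lemma Gstar_dist (n s t : ℕ) (hs : 1 ≤ s) (u v : Fin n) :
    (Gstar n s t).dist u v = if u = v then 0 else if (Gstar n s t).Adj u v then 1 else 2 := by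
  split_ifs with h1 h2
  · simp [h1]
  · exact SimpleGraph.dist_eq_one_iff_adj.2 h2
  · have hn0 : 0 < n := u.pos
    have hus : s ≤ (u : ℕ) := by
      by_contra h; exact h2 ⟨h1, Or.inl (by omega)⟩
    have hvs : s ≤ (v : ℕ) := by
      by_contra h; exact h2 ⟨h1, Or.inr (Or.inl (by omega))⟩
    set w : Fin n := ⟨0, hn0⟩ with hw
    have huw : (Gstar n s t).Adj u w := ⟨by
        intro h; apply absurd (congrArg Fin.val h); simp [hw]; omega,
      Or.inr (Or.inl (by simp [hw]; omega))⟩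
    have hwv : (Gstar n s t).Adj w v := ⟨by
        intro h; apply absurd (congrArg Fin.val h); simp [hw]; omega,
      Or.inl (by simp [hw]; omega)⟩
    have hle : (Gstar n s t).dist u v ≤ 2 := by
      have := SimpleGraph.dist_le (SimpleGraph.Walk.cons huw (SimpleGraph.Walk.cons hwv SimpleGraph.Walk.nil))
      simpa using this
    have hpos : 0 < (Gstar n s t).dist u v :=
      SimpleGraph.Reachable.pos_dist_of_ne ⟨SimpleGraph.Walk.cons huw (SimpleGraph.Walk.cons hwv SimpleGraph.Walk.nil)⟩ h1
    have hne1 : (Gstar n s t).dist u v ≠ 1 := fun h => h2 (SimpleGraph.dist_eq_one_iff_adj.1 h)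
    omega

lemma Gstar_dist_f (n s t : ℕ) (hs : 1 ≤ s) (u v : Fin n) :
    (Gstar n s t).dist u v =
      (if (u:ℕ) = (v:ℕ) then 0 else
        if ((u:ℕ) < s ∨ (v:ℕ) < s ∨ ((u:ℕ) < n - t ∧ (v:ℕ) < n - t)) then 1 else 2) := by
  rw [Gstar_dist n s t hs]
  rcases eq_or_ne u v with h | h
  · simp [h]
  · have hv : (u:ℕ) ≠ (v:ℕ) := fun hh => h (Fin.ext hh)
    rw [if_neg h, if_neg hv]
    congr 1
    simp only [eq_iff_iff]
    constructor
    · intro hadj; exact hadj.2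
    · intro hc; exact ⟨h, hc⟩

lemma sum_sum_dist (n s t : ℕ) (hs : 1 ≤ s) :
    ∑ u : Fin n, ∑ v : Fin n, (Gstar n s t).dist u v =
      ∑ i ∈ range n, ∑ j ∈ range n,
        (if i = j then 0 else if (i < s ∨ j < s ∨ (i < n - t ∧ j < n - t)) then 1 else 2) := by
  rw [← Fin.sum_univ_eq_sum_range (fun i => ∑ j ∈ range n,
        (if i = j then 0 else if (i < s ∨ j < s ∨ (i < n - t ∧ j < n - t)) then 1 else 2))]
  apply Finset.sum_congr rfl
  intro u _
  rw [← Fin.sum_univ_eq_sum_range (fun j => (if (u:ℕ) = j then 0 else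
      if ((u:ℕ) < s ∨ j < s ∨ ((u:ℕ) < n - t ∧ j < n - t)) then 1 else 2))]
  exact Finset.sum_congr rfl fun v _ => Gstar_dist_f n s t hs u v

lemma two_wiener (n : ℕ) (G : SimpleGraph (Fin n)) :
    2 * wiener G = ∑ u : Fin n, ∑ v : Fin n, G.dist u v := by
  have h1 : ∑ u : Fin n, ∑ v : Fin n, G.dist u v
      = ∑ p ∈ (univ : Finset (Fin n × Fin n)), G.dist p.1 p.2 := by
    rw [← Finset.sum_product']
    rfl
  rw [h1, ← Finset.sum_filter_add_sum_filter_not univ (fun p : Fin n × Fin n => p.1 < p.2)]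
  have h2 : ∑ p ∈ univ.filter (fun p : Fin n × Fin n => ¬ p.1 < p.2), G.dist p.1 p.2
      = ∑ p ∈ univ.filter (fun p : Fin n × Fin n => p.2 < p.1), G.dist p.1 p.2 := by
    rw [← Finset.sum_filter_add_sum_filter_not (univ.filter (fun p : Fin n × Fin n => ¬ p.1 < p.2))
        (fun p : Fin n × Fin n => p.2 < p.1)]
    have he : (univ.filter (fun p : Fin n × Fin n => ¬ p.1 < p.2)).filter
        (fun p : Fin n × Fin n => p.2 < p.1) = univ.filter (fun p : Fin n × Fin n => p.2 < p.1) := by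
      ext p; simp only [Finset.mem_filter, Finset.mem_univ, true_and]
      constructor
      · exact fun h => h.2
      · intro h; exact ⟨not_lt.2 (le_of_lt h), h⟩
    have hz : ∑ p ∈ (univ.filter (fun p : Fin n × Fin n => ¬ p.1 < p.2)).filter
        (fun p : Fin n × Fin n => ¬ p.2 < p.1), G.dist p.1 p.2 = 0 := by
      apply Finset.sum_eq_zero
      intro p hp
      simp only [Finset.mem_filter, Finset.mem_univ, true_and] at hp
      have : p.1 = p.2 := le_antisymm (not_lt.1 hp.2) (not_lt.1 hp.1)
      simp [this]
    rw [he, hz, add_zero]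
  have h3 : ∑ p ∈ univ.filter (fun p : Fin n × Fin n => p.2 < p.1), G.dist p.1 p.2
      = wiener G := by
    unfold wiener
    apply Finset.sum_nbij' (fun p => p.swap) (fun p => p.swap)
    · intro p hp; simp at hp ⊢; exact hp
    · intro p hp; simp at hp ⊢; exact hp
    · intro p _; simp
    · intro p _; simp
    · intro p _; exact SimpleGraph.dist_comm
  rw [h2, h3, wiener]
  ring


lemma eigset_bddAbove {n : ℕ} (M : Matrix (Fin n) (Fin n) ℝ) (hM : ∀ i j, 0 ≤ M i j) :
    BddAbove {t : ℝ | ∃ x : Fin n → ℝ, x ≠ 0 ∧ M.mulVec x = t • x} := by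
  use ∑ i, ∑ j, M i j
  rintro t ⟨x, hx0, hx⟩
  obtain ⟨i1, hi1⟩ := Function.ne_iff.1 hx0
  obtain ⟨i0, -, hmax⟩ := Finset.exists_max_image Finset.univ (fun i => |x i|)
    ⟨i1, Finset.mem_univ i1⟩
  have hpos : 0 < |x i0| := lt_of_lt_of_le (abs_pos.2 hi1) (hmax i1 (Finset.mem_univ i1))
  have heq : ∑ j, M i0 j * x j = t * x i0 := by
    have := congrFun hx i0
    simpa [Matrix.mulVec, dotProduct] using this
  have h1 : |t| * |x i0| ≤ (∑ j, M i0 j) * |x i0| := by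
    rw [← abs_mul, ← heq]
    calc |∑ j, M i0 j * x j| ≤ ∑ j, |M i0 j * x j| := Finset.abs_sum_le_sum_abs _ _
      _ ≤ ∑ j, M i0 j * |x i0| := by
          apply Finset.sum_le_sum
          intro j _
          rw [abs_mul, abs_of_nonneg (hM i0 j)]
          exact mul_le_mul_of_nonneg_left (hmax j (Finset.mem_univ j)) (hM i0 j)
      _ = (∑ j, M i0 j) * |x i0| := by rw [Finset.sum_mul]
  have h2 : |t| ≤ ∑ j, M i0 j := le_of_mul_le_mul_right h1 hpos
  have h3 : ∑ j, M i0 j ≤ ∑ i, ∑ j, M i j := by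
    apply Finset.single_le_sum (f := fun i => ∑ j, M i j) _ (Finset.mem_univ i0)
    intro i _
    exact Finset.sum_nonneg fun j _ => hM i j
  calc t ≤ |t| := le_abs_self t
    _ ≤ _ := le_trans h2 h3

lemma exists_eig_ge {n : ℕ} (hn : 0 < n) (M : Matrix (Fin n) (Fin n) ℝ) (hM : M.IsHermitian) :
    ∃ lam : ℝ, (∃ x : Fin n → ℝ, x ≠ 0 ∧ M.mulVec x = lam • x) ∧
      (∑ i, ∑ j, M i j) ≤ lam * n := by
  haveI : Nonempty (Fin n) := ⟨⟨0, hn⟩⟩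
  obtain ⟨i0, -, hmax⟩ := Finset.exists_max_image Finset.univ hM.eigenvalues
    ⟨⟨0, hn⟩, Finset.mem_univ _⟩
  set lam := hM.eigenvalues i0 with hlam
  set b := hM.eigenvectorBasis with hb
  refine ⟨lam, ⟨⇑(b i0), ?_, hM.mulVec_eigenvectorBasis i0⟩, ?_⟩
  · exact fun h => b.orthonormal.ne_zero i0 ((WithLp.ofLp_eq_zero 2).1 h)
  · set x1 : EuclideanSpace ℝ (Fin n) := WithLp.toLp 2 (fun _ => 1) with hx1
    set y : EuclideanSpace ℝ (Fin n) := WithLp.toLp 2 (M.mulVec x1) with hy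
    have hinner : ∀ f g : EuclideanSpace ℝ (Fin n), ⟪f, g⟫_ℝ = ∑ k, f k * g k := by
      intro f g; simp [PiLp.inner_apply, mul_comm]
    have hMsym : ∀ k j, M k j = M j k := fun k j => by simpa using hM.apply j k
    have hbiy : ∀ i, ⟪(b i : EuclideanSpace ℝ (Fin n)), y⟫_ℝ =
        hM.eigenvalues i * ⟪(b i : EuclideanSpace ℝ (Fin n)), x1⟫_ℝ := by
      intro i
      rw [hinner, hinner]
      have hm : ∀ k, y k = ∑ j, M k j := by
        intro k; simp [hy, Matrix.mulVec, dotProduct, hx1]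
      have hmb : ∀ k, ∑ j, M k j * (b i) j = hM.eigenvalues i * (b i) k := by
        intro k
        have := congrFun (hM.mulVec_eigenvectorBasis i) k
        simpa [Matrix.mulVec, dotProduct] using this
      calc ∑ k, (b i) k * y k = ∑ k, ∑ j, (b i) k * M k j := by
            apply Finset.sum_congr rfl; intro k _
            rw [hm k, Finset.mul_sum]
        _ = ∑ j, ∑ k, M j k * (b i) k := by
            rw [Finset.sum_comm]
            apply Finset.sum_congr rfl; intro j _
            apply Finset.sum_congr rfl; intro k _
            rw [hMsym k j]; ring
        _ = ∑ j, hM.eigenvalues i * (b i) j := Finset.sum_congr rfl fun j _ => hmb j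
        _ = hM.eigenvalues i * ∑ k, (b i) k * x1 k := by
            rw [Finset.mul_sum]
            apply Finset.sum_congr rfl; intro j _
            simp [hx1]
    have key2 := b.sum_inner_mul_inner x1 y
    have key1 := b.sum_inner_mul_inner x1 x1
    have hx1y : ⟪x1, y⟫_ℝ = ∑ k, ∑ j, M k j := by
      rw [hinner]
      apply Finset.sum_congr rfl; intro k _
      simp [hy, hx1, Matrix.mulVec, dotProduct]
    have hx1x1 : ⟪x1, x1⟫_ℝ = (n : ℝ) := by
      rw [hinner]; simp [hx1]
    have hle : ⟪x1, y⟫_ℝ ≤ lam * (n : ℝ) := by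
      rw [← key2, ← hx1x1, ← key1, Finset.mul_sum]
      apply Finset.sum_le_sum
      intro i _
      rw [hbiy i]
      have hc : ⟪(b i : EuclideanSpace ℝ (Fin n)), x1⟫_ℝ = ⟪x1, (b i : EuclideanSpace ℝ (Fin n))⟫_ℝ :=
        real_inner_comm _ _
      rw [hc]
      have : ⟪x1, (b i : EuclideanSpace ℝ (Fin n))⟫_ℝ * ⟪x1, (b i : EuclideanSpace ℝ (Fin n))⟫_ℝ ≥ 0 :=
        mul_self_nonneg _
      nlinarith [hmax i (Finset.mem_univ i)]
    rw [hx1y] at hle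
    exact hle


/-- For `G_* = K_{mb−1} ∨ (K_{n−(m+1)b+1} ∪ bK_1)` one has
`2W(G_*) = n² + (2b−1)n − 2b²m − b² + b`, and consequently `μ(G_*) > n + 2b − 2`. -/
theorem wiener_distRad_Gstar (m b n : ℕ) (hm : 2 ≤ m) (hb : 1 ≤ b)
    (hn : 2 * b ^ 2 * m + b ^ 2 - b + 1 ≤ n) :
    2 * (wiener (Gstar n (m * b - 1) b) : ℝ) =
        (n : ℝ) ^ 2 + (2 * b - 1) * n - 2 * b ^ 2 * m - b ^ 2 + b ∧
      (n : ℝ) + 2 * b - 2 < distRad (Gstar n (m * b - 1) b) := by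
  classical
  set s := m * b - 1 with hsdef
  have hs2 : 2 ≤ m * b := by nlinarith
  have hs : 1 ≤ s := by omega
  have hbb : b ≤ b ^ 2 := by nlinarith
  have hassoc : 2 * b ^ 2 * m = 2 * (b ^ 2 * m) := by ring
  have hn' : 2 * (b ^ 2 * m) + b ^ 2 + 1 ≤ n + b := by omega
  have hstn : s + b ≤ n := by
    have : m * b + b ≤ n + 1 := by nlinarith
    omega
  have hn0 : 0 < n := by omega
  set G := Gstar n s b with hG
  set Sn := ∑ u : Fin n, ∑ v : Fin n, G.dist u v with hSn
  have hSnat : Sn + n + 2 * b * s + b * b + b = n * n + 2 * b * n := by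
    rw [hSn, hG, sum_sum_dist n s b hs]
    exact auxSumF n s b hs hstn
  have h2w : 2 * wiener G = Sn := two_wiener n G
  have hscast : ((s : ℕ) : ℝ) = (m : ℝ) * b - 1 := by
    rw [hsdef, Nat.cast_sub (by omega : 1 ≤ m * b)]
    push_cast
    ring
  have hSreal : ((Sn : ℕ) : ℝ) = (n : ℝ) ^ 2 + (2 * b - 1) * n - 2 * b ^ 2 * m - b ^ 2 + b := by
    have hc := congrArg (Nat.cast : ℕ → ℝ) hSnat
    push_cast at hc
    rw [hscast] at hc
    nlinarith [hc]
  constructor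
  · have hc := congrArg (Nat.cast : ℕ → ℝ) h2w
    push_cast at hc
    rw [hc, hSreal]
  · have hherm : (distMat G).IsHermitian := by
      apply Matrix.ext
      intro i j
      simp only [Matrix.conjTranspose_apply, distMat, Matrix.of_apply, star_trivial]
      rw [SimpleGraph.dist_comm]
    have hnonneg : ∀ i j, 0 ≤ distMat G i j := by
      intro i j
      simp only [distMat, Matrix.of_apply]
      exact Nat.cast_nonneg _
    have hsum : ∑ i, ∑ j, distMat G i j = ((Sn : ℕ) : ℝ) := by
      rw [hSn]
      push_cast
      rfl
    obtain ⟨lam, hmem, hge⟩ := exists_eig_ge hn0 (distMat G) hherm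
    rw [hsum, hSreal] at hge
    have hnge : ((2 * (b ^ 2 * m) + b ^ 2 + 1 : ℕ) : ℝ) ≤ ((n + b : ℕ) : ℝ) := by
      exact_mod_cast hn'
    push_cast at hnge
    have hlam : (n : ℝ) + 2 * b - 2 < lam := by
      have hnpos : (0 : ℝ) < n := by exact_mod_cast hn0
      nlinarith [hge, hnge, hnpos]
    refine lt_of_lt_of_le hlam ?_
    show lam ≤ distRad G
    unfold distRad maxEig
    exact le_csSup (eigset_bddAbove (distMat G) hnonneg) hmem
end
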